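/- arXiv:2109.14362 — 4 statements merged into one kernel-verified Lean document; each statement's English description precedes it below -/
import Mathlib

section
/- For any partition λ and any tableau of complex variables s = (s_{ij}) of shape λ belonging to W_λ, the series ζ_λ(s) = Σ_{M=(m_{ij})∈SSYT_λ} Π_{(i,j)∈λ} m_{ij}^{-s_{ij}} converges absolutely. -/
noncomputable section

/-- The box `(i,j)` (0-indexed row `i`, column `j`) belongs to the skew diagram `λ/μ`. -/
def SkewCell (lam mu : ℕ → ℕ) (p : ℕ × ℕ) : Prop :=
  mu p.1 ≤ p.2 ∧ p.2 < lam p.1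

/-- The finite set of boxes of the skew diagram `λ/μ` (where `lam i = 0` for `i ≥ r`). -/
def skewCells (lam mu : ℕ → ℕ) (r : ℕ) : Finset (ℕ × ℕ) :=
  (Finset.range r ×ˢ Finset.range (lam 0)).filter fun p => mu p.1 ≤ p.2 ∧ p.2 < lam p.1

/-- Semi-standard Young tableau of skew shape `λ/μ`: positive entries on boxes (and `0`
off the diagram), rows weakly increasing, columns strictly increasing. -/
def IsSSYT (lam mu : ℕ → ℕ) (M : ℕ × ℕ → ℕ) : Prop :=
  (∀ p, SkewCell lam mu p → 0 < M p) ∧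
  (∀ p, ¬ SkewCell lam mu p → M p = 0) ∧
  (∀ i j, SkewCell lam mu (i, j) → SkewCell lam mu (i, j + 1) → M (i, j) ≤ M (i, j + 1)) ∧
  (∀ i j, SkewCell lam mu (i, j) → SkewCell lam mu (i + 1, j) → M (i, j) < M (i + 1, j))

/-- A corner of the skew diagram `λ/μ`. -/
def SkewCorner (lam mu : ℕ → ℕ) (p : ℕ × ℕ) : Prop :=
  SkewCell lam mu p ∧ ¬ SkewCell lam mu (p.1 + 1, p.2) ∧ ¬ SkewCell lam mu (p.1, p.2 + 1)

/-- The (skew) Schur multiple zeta function. -/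
def schurZeta (lam mu : ℕ → ℕ) (r : ℕ) (s : ℕ × ℕ → ℂ) : ℂ :=
  ∑' M : {M : ℕ × ℕ → ℕ // IsSSYT lam mu M},
    ∏ p ∈ skewCells lam mu r, ((M.1 p : ℂ) ^ (-(s p)))

/-! ### Auxiliary material -/

namespace SchurAux

variable (lam : ℕ → ℕ) (r : ℕ)

lemma skewCell_zero_iff (p : ℕ × ℕ) : SkewCell lam (fun _ => 0) p ↔ p.2 < lam p.1 := by
  simp [SkewCell]

lemma mem_skewCells_zero (hA : Antitone lam) (hr : ∀ i, r ≤ i → lam i = 0) (p : ℕ × ℕ) :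
    p ∈ skewCells lam (fun _ => 0) r ↔ p.2 < lam p.1 := by
  simp only [skewCells, Finset.mem_filter, Finset.mem_product, Finset.mem_range]
  constructor
  · rintro ⟨_, _, h⟩; exact h
  · intro h
    have h1 : p.1 < r := by
      by_contra hh
      rw [hr p.1 (le_of_not_gt hh)] at h; omega
    exact ⟨⟨h1, lt_of_lt_of_le h (hA (Nat.zero_le _))⟩, Nat.zero_le _, h⟩

lemma ssyt_col_le (hA : Antitone lam) {M : ℕ × ℕ → ℕ} (hM : IsSSYT lam (fun _ => 0) M)
    (i k j : ℕ) (h : j < lam (i + k)) : M (i, j) ≤ M (i + k, j) := by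
  induction k with
  | zero => exact le_refl _
  | succ k ih =>
    have h2 : j < lam (i + k) := lt_of_lt_of_le h (hA (by omega))
    exact le_trans (ih h2)
      (le_of_lt (hM.2.2.2 (i + k) j ⟨Nat.zero_le _, h2⟩ ⟨Nat.zero_le _, h⟩))

lemma ssyt_row_le {M : ℕ × ℕ → ℕ} (hM : IsSSYT lam (fun _ => 0) M)
    (i j k : ℕ) (h : j + k < lam i) : M (i, j) ≤ M (i, j + k) := by
  induction k with
  | zero => exact le_refl _
  | succ k ih =>
    have h2 : j + k < lam i := by omega
    exact le_trans (ih h2) (hM.2.2.1 i (j + k) ⟨Nat.zero_le _, h2⟩ ⟨Nat.zero_le _, h⟩)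

/-- The row index of the corner associated to column `j`. -/
def rowOf (j : ℕ) : ℕ := Nat.findGreatest (fun i => j < lam i) r

/-- The corner associated to a box `p`. -/
def cor (p : ℕ × ℕ) : ℕ × ℕ := (rowOf lam r p.2, lam (rowOf lam r p.2) - 1)

variable {lam r}

lemma rowOf_spec (hr : ∀ i, r ≤ i → lam i = 0) {i j : ℕ} (h : j < lam i) :
    j < lam (rowOf lam r j) := by
  have hi : i ≤ r := by
    by_contra hh
    rw [hr i (by omega)] at h; omega
  exact Nat.findGreatest_spec (P := fun i => j < lam i) hi h

lemma rowOf_ge (hr : ∀ i, r ≤ i → lam i = 0) {i j : ℕ} (h : j < lam i) :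
    i ≤ rowOf lam r j := by
  have hi : i ≤ r := by
    by_contra hh
    rw [hr i (by omega)] at h; omega
  by_contra hh
  exact Nat.findGreatest_is_greatest (P := fun i => j < lam i) (not_le.mp hh) hi h

lemma rowOf_max (hr : ∀ i, r ≤ i → lam i = 0) {j k : ℕ} (hk : rowOf lam r j < k) :
    lam k ≤ j := by
  by_cases hkr : k ≤ r
  · have := Nat.findGreatest_is_greatest (P := fun i => j < lam i) hk hkr
    omega
  · rw [hr k (by omega)]; omega

lemma cor_corner (hr : ∀ i, r ≤ i → lam i = 0) {p : ℕ × ℕ}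
    (h : SkewCell lam (fun _ => 0) p) : SkewCorner lam (fun _ => 0) (cor lam r p) := by
  have hl : p.2 < lam (rowOf lam r p.2) := rowOf_spec hr h.2
  have hb : lam (rowOf lam r p.2 + 1) ≤ p.2 := rowOf_max hr (Nat.lt_succ_self _)
  refine ⟨⟨Nat.zero_le _, by simp only [cor]; omega⟩, ?_, ?_⟩
  · simp only [SkewCell, cor, not_and]; intro _; omega
  · simp only [SkewCell, cor, not_and]; intro _; omega

lemma cor_fix (hA : Antitone lam) (hr : ∀ i, r ≤ i → lam i = 0) {y : ℕ × ℕ}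
    (hy : SkewCorner lam (fun _ => 0) y) : cor lam r y = y := by
  obtain ⟨⟨-, h1⟩, h2, h3⟩ := hy
  simp only [SkewCell, not_and] at h2 h3
  have h2' : lam (y.1 + 1) ≤ y.2 := by
    have := h2 (Nat.zero_le _); omega
  have h3' : lam y.1 = y.2 + 1 := by
    have := h3 (Nat.zero_le _); omega
  have hrow : rowOf lam r y.2 = y.1 := by
    have hyr : y.1 ≤ r := by
      by_contra hh
      rw [hr y.1 (by omega)] at h1; omega
    rw [rowOf, Nat.findGreatest_eq_iff]
    refine ⟨hyr, fun _ => h1, fun k hk _ => ?_⟩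
    have : lam k ≤ lam (y.1 + 1) := hA (by omega)
    omega
  simp only [cor, hrow, h3', Nat.add_sub_cancel]

lemma cor_cell_le (hA : Antitone lam) (hr : ∀ i, r ≤ i → lam i = 0)
    {M : ℕ × ℕ → ℕ} (hM : IsSSYT lam (fun _ => 0) M) {p : ℕ × ℕ}
    (h : SkewCell lam (fun _ => 0) p) : M p ≤ M (cor lam r p) := by
  obtain ⟨i, j⟩ := p
  have hcell : j < lam i := h.2
  have hi' : i ≤ rowOf lam r j := rowOf_ge hr hcell
  have hl : j < lam (rowOf lam r j) := rowOf_spec hr hcell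
  have h1 : M (i, j) ≤ M (rowOf lam r j, j) := by
    have := ssyt_col_le lam hA hM i (rowOf lam r j - i) j
      (by rw [Nat.add_sub_cancel' hi']; exact hl)
    rwa [Nat.add_sub_cancel' hi'] at this
  have h2 : M (rowOf lam r j, j) ≤ M (rowOf lam r j, lam (rowOf lam r j) - 1) := by
    have := ssyt_row_le lam hM (rowOf lam r j) j (lam (rowOf lam r j) - 1 - j)
      (by omega)
    rwa [show j + (lam (rowOf lam r j) - 1 - j) = lam (rowOf lam r j) - 1 by omega] at this
  exact le_trans h1 h2

end SchurAux

open SchurAux in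
/-- For a partition `λ` (given by an antitone function `lam` vanishing
from row `r` on) and a tableau of complex variables `s ∈ W_λ` (real part `≥ 1` on all
boxes, `> 1` at the corners), the series defining the Schur multiple zeta function
`ζ_λ(s) = Σ_{M ∈ SSYT_λ} Π_{(i,j) ∈ λ} m_{ij}^{-s_{ij}}` converges absolutely. -/
theorem schur_multiple_zeta_abs_convergence
    (lam : ℕ → ℕ) (r : ℕ) (hA : Antitone lam) (hr : ∀ i, r ≤ i → lam i = 0)
    (s : ℕ × ℕ → ℂ)
    (hW1 : ∀ p, SkewCell lam (fun _ => 0) p → ¬ SkewCorner lam (fun _ => 0) p →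
      1 ≤ (s p).re)
    (hW2 : ∀ p, SkewCorner lam (fun _ => 0) p → 1 < (s p).re) :
    Summable fun M : {M : ℕ × ℕ → ℕ // IsSSYT lam (fun _ => 0) M} =>
      ‖∏ p ∈ skewCells lam (fun _ => 0) r, ((M.1 p : ℂ) ^ (-(s p)))‖ := by
  classical
  set C : Finset (ℕ × ℕ) := skewCells lam (fun _ => 0) r with hCdef
  have hmem : ∀ p, p ∈ C ↔ SkewCell lam (fun _ => 0) p := by
    intro p
    rw [hCdef, mem_skewCells_zero lam r hA hr p, skewCell_zero_iff]
  set N : ℕ := C.card with hN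
  set σ : ℕ × ℕ → ℝ := fun p => (s p).re with hσ
  set δ : ℕ × ℕ → ℝ := fun p => (σ (cor lam r p) - 1) / N with hδ
  have hσ1 : ∀ p ∈ C, 1 ≤ σ p := by
    intro p hp
    by_cases hc : SkewCorner lam (fun _ => 0) p
    · exact le_of_lt (hW2 p hc)
    · exact hW1 p ((hmem p).1 hp) hc
  have hNpos : ∀ p ∈ C, 0 < (N : ℝ) := by
    intro p hp
    have : 0 < N := Finset.card_pos.2 ⟨p, hp⟩
    exact_mod_cast this
  have hδpos : ∀ p ∈ C, 0 < δ p := by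
    intro p hp
    have hc : SkewCorner lam (fun _ => 0) (cor lam r p) := cor_corner hr ((hmem p).1 hp)
    have := hW2 _ hc
    exact div_pos (by simp only [hσ]; linarith) (hNpos p hp)
  set w : (ℕ × ℕ) → ℕ → ℝ := fun p n => (n : ℝ) ^ (-(1 + δ p)) with hw
  have hw_nonneg : ∀ p n, 0 ≤ w p n := fun p n => Real.rpow_nonneg (Nat.cast_nonneg n) _
  have hw_sum : ∀ p ∈ C, Summable (w p) := by
    intro p hp
    exact Real.summable_nat_rpow.mpr (by have := hδpos p hp; linarith)
  set c : ℝ := ∏ p ∈ C, ∑' n, w p n with hc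
  apply summable_of_sum_le (fun M => norm_nonneg _)
  intro u
  -- pointwise bound
  have hpt : ∀ M : {M : ℕ × ℕ → ℕ // IsSSYT lam (fun _ => 0) M},
      ‖∏ p ∈ C, ((M.1 p : ℂ) ^ (-(s p)))‖ ≤ ∏ p ∈ C, w p (M.1 p) := by
    intro Mfull
    obtain ⟨M, hM⟩ := Mfull
    have hm1 : ∀ p ∈ C, 1 ≤ M p := fun p hp => hM.1 p ((hmem p).1 hp)
    have hmpos : ∀ p ∈ C, (0 : ℝ) < (M p : ℝ) := by
      intro p hp; exact_mod_cast hm1 p hp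
    have hm1' : ∀ p ∈ C, (1 : ℝ) ≤ (M p : ℝ) := by
      intro p hp; exact_mod_cast hm1 p hp
    rw [norm_prod]
    have hfac : ∀ p ∈ C, ‖((M p : ℂ)) ^ (-(s p))‖ = (M p : ℝ) ^ (-σ p) := by
      intro p hp
      rw [show ((M p : ℂ)) = (((M p : ℝ)) : ℂ) by norm_cast,
        Complex.norm_cpow_eq_rpow_re_of_pos (hmpos p hp), Complex.neg_re]
    rw [Finset.prod_congr rfl hfac]
    -- split the exponents
    have hsplitL : ∀ p ∈ C, (M p : ℝ) ^ (-σ p)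
        = (M p : ℝ) ^ (-1 : ℝ) * (M p : ℝ) ^ (-(σ p - 1)) := by
      intro p hp
      rw [← Real.rpow_add (hmpos p hp)]; ring_nf
    have hsplitR : ∀ p ∈ C, w p (M p)
        = (M p : ℝ) ^ (-1 : ℝ) * (M p : ℝ) ^ (-δ p) := by
      intro p hp
      simp only [hw]
      rw [← Real.rpow_add (hmpos p hp)]; ring_nf
    rw [Finset.prod_congr rfl hsplitL, Finset.prod_congr rfl hsplitR,
      Finset.prod_mul_distrib, Finset.prod_mul_distrib]
    refine mul_le_mul_of_nonneg_left ?_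
      (Finset.prod_nonneg fun p _ => Real.rpow_nonneg (Nat.cast_nonneg _) _)
    -- key fiberwise inequality
    have hmapsto : ∀ p ∈ C, cor lam r p ∈ C := by
      intro p hp
      exact (hmem _).2 (cor_corner hr ((hmem p).1 hp)).1
    rw [← Finset.prod_fiberwise_of_maps_to hmapsto fun p => (M p : ℝ) ^ (-(σ p - 1)),
      ← Finset.prod_fiberwise_of_maps_to hmapsto fun p => (M p : ℝ) ^ (-δ p)]
    refine Finset.prod_le_prod (fun y _ => Finset.prod_nonneg fun p _ =>
      Real.rpow_nonneg (Nat.cast_nonneg _) _) ?_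
    intro y hy
    set B : Finset (ℕ × ℕ) := C.filter fun p => cor lam r p = y with hB
    rcases B.eq_empty_or_nonempty with hBe | ⟨q, hq⟩
    · rw [hBe]; simp
    have hqC : q ∈ C := (Finset.mem_filter.1 hq).1
    have hqy : cor lam r q = y := (Finset.mem_filter.1 hq).2
    have hycorner : SkewCorner lam (fun _ => 0) y := by
      rw [← hqy]; exact cor_corner hr ((hmem q).1 hqC)
    have hyB : y ∈ B := by
      rw [hB, Finset.mem_filter]
      exact ⟨hy, cor_fix hA hr hycorner⟩
    have hyC : y ∈ C := hy
    have hMy1 : (1 : ℝ) ≤ (M y : ℝ) := hm1' y hyC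
    have hMypos : (0 : ℝ) < (M y : ℝ) := hmpos y hyC
    have hσy : 1 < σ y := hW2 y hycorner
    -- entries in the fiber are dominated by the corner entry
    have hdom : ∀ p ∈ B, (M p : ℝ) ≤ (M y : ℝ) := by
      intro p hp
      obtain ⟨hpC, hpy⟩ := Finset.mem_filter.1 hp
      have := cor_cell_le hA hr hM ((hmem p).1 hpC)
      rw [hpy] at this
      exact_mod_cast this
    have hδB : ∀ p ∈ B, δ p = (σ y - 1) / N := by
      intro p hp
      simp only [hδ]
      rw [(Finset.mem_filter.1 hp).2]
    calc ∏ p ∈ B, (M p : ℝ) ^ (-(σ p - 1))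
        ≤ ∏ p ∈ B, (if p = y then (M p : ℝ) ^ (-(σ p - 1)) else 1) := by
          refine Finset.prod_le_prod (fun p _ =>
            Real.rpow_nonneg (Nat.cast_nonneg _) _) ?_
          intro p hp
          by_cases hpy : p = y
          · rw [if_pos hpy]
          · rw [if_neg hpy]
            refine Real.rpow_le_one_of_one_le_of_nonpos
              (hm1' p (Finset.mem_filter.1 hp).1) ?_
            have := hσ1 p (Finset.mem_filter.1 hp).1
            linarith
      _ = (M y : ℝ) ^ (-(σ y - 1)) := by
          rw [Finset.prod_ite_eq' B y fun p => (M p : ℝ) ^ (-(σ p - 1)), if_pos hyB]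
      _ ≤ (M y : ℝ) ^ (-(B.card * ((σ y - 1) / N))) := by
          refine Real.rpow_le_rpow_of_exponent_le hMy1 ?_
          have hBN : (B.card : ℝ) ≤ (N : ℝ) := by
            exact_mod_cast Finset.card_le_card (Finset.filter_subset _ _)
          have hNp : (0 : ℝ) < N := hNpos y hyC
          rw [neg_le_neg_iff]
          calc (B.card : ℝ) * ((σ y - 1) / N) ≤ (N : ℝ) * ((σ y - 1) / N) := by
                refine mul_le_mul_of_nonneg_right hBN ?_
                have hs1 : (0:ℝ) ≤ σ y - 1 := by linarith
                positivity
            _ = σ y - 1 := by field_simp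
      _ = ∏ p ∈ B, (M y : ℝ) ^ (-((σ y - 1) / N)) := by
          rw [Finset.prod_const, ← Real.rpow_natCast ((M y : ℝ) ^ (-((σ y - 1) / N))),
            ← Real.rpow_mul (le_of_lt hMypos)]
          ring_nf
      _ ≤ ∏ p ∈ B, (M p : ℝ) ^ (-δ p) := by
          refine Finset.prod_le_prod (fun p _ =>
            Real.rpow_nonneg (Nat.cast_nonneg _) _) ?_
          intro p hp
          rw [hδB p hp]
          refine Real.rpow_le_rpow_of_nonpos (hmpos p (Finset.mem_filter.1 hp).1)
            (hdom p hp) ?_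
          have h1 : (0:ℝ) ≤ σ y - 1 := by linarith
          have h2 : (0:ℝ) < N := hNpos y hyC
          rw [neg_nonpos]
          positivity
  -- finite sums are bounded
  calc ∑ M ∈ u, ‖∏ p ∈ C, ((M.1 p : ℂ) ^ (-(s p)))‖
      ≤ ∑ M ∈ u, ∏ p ∈ C, w p (M.1 p) := Finset.sum_le_sum fun M _ => hpt M
    _ ≤ c := ?_
  -- pass to functions on the boxes
  set G : {M : ℕ × ℕ → ℕ // IsSSYT lam (fun _ => 0) M} → (↥C → ℕ) :=
    fun M p => M.1 ↑p with hG
  have hGinj : Function.Injective G := by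
    intro M M' h
    ext p
    by_cases hp : p ∈ C
    · exact congrFun h ⟨p, hp⟩
    · rw [M.2.2.1 p fun hc => hp ((hmem p).2 hc),
        M'.2.2.1 p fun hc => hp ((hmem p).2 hc)]
  set T : ℕ := u.sup fun M => C.sup fun p => M.1 p with hT
  have hrange : ∀ M ∈ u, G M ∈ Fintype.piFinset fun _ : ↥C => Finset.range (T + 1) := by
    intro M hM
    rw [Fintype.mem_piFinset]
    intro p
    rw [Finset.mem_range]
    simp only [hG]
    have h1 : M.1 ↑p ≤ C.sup fun q => M.1 q := Finset.le_sup p.2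
    have h2 : (C.sup fun q => M.1 q) ≤ T := Finset.le_sup (f := fun M : {M : ℕ × ℕ → ℕ // IsSSYT lam (fun _ => 0) M} => C.sup fun p => M.1 p) hM
    omega
  have hprodeq : ∀ M : {M : ℕ × ℕ → ℕ // IsSSYT lam (fun _ => 0) M},
      ∏ p ∈ C, w p (M.1 p) = ∏ p : ↥C, w ↑p (G M p) := by
    intro M
    rw [Finset.prod_coe_sort C fun p => w p (M.1 p)]
  calc ∑ M ∈ u, ∏ p ∈ C, w p (M.1 p)
      = ∑ g ∈ u.image G, ∏ p : ↥C, w ↑p (g p) := by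
        rw [Finset.sum_image fun M _ M' _ h => hGinj h]
        exact Finset.sum_congr rfl fun M _ => hprodeq M
    _ ≤ ∑ g ∈ Fintype.piFinset (fun _ : ↥C => Finset.range (T + 1)),
          ∏ p : ↥C, w ↑p (g p) := by
        refine Finset.sum_le_sum_of_subset_of_nonneg ?_
          fun g _ _ => Finset.prod_nonneg fun p _ => hw_nonneg _ _
        intro g hg
        obtain ⟨M, hM, rfl⟩ := Finset.mem_image.1 hg
        exact hrange M hM
    _ = ∏ p : ↥C, ∑ n ∈ Finset.range (T + 1), w ↑p n := by
        rw [Finset.prod_univ_sum]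
    _ ≤ ∏ p : ↥C, ∑' n, w ↑p n := by
        refine Finset.prod_le_prod (fun p _ => Finset.sum_nonneg fun n _ => hw_nonneg _ _)
          fun p _ => ?_
        exact Summable.sum_le_tsum _ (fun n _ => hw_nonneg _ _) (hw_sum ↑p p.2)
    _ = c := Finset.prod_coe_sort C fun p => ∑' n, w p n
end
end

section
/- Let λ and μ be partitions with μ ⊆ λ and set δ = λ/μ. For any tableau of complex variables s = (s_{ij}) of skew shape δ belonging to W_δ, the series ζ_δ(s) = Σ_{M=(m_{ij})∈SSYT_δ} Π_{(i,j)∈δ} m_{ij}^{-s_{ij}} converges absolutely. -/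
noncomputable section

instance (lam mu : ℕ → ℕ) (p : ℕ × ℕ) : Decidable (SkewCell lam mu p) :=
  inferInstanceAs (Decidable (_ ∧ _))

instance (lam mu : ℕ → ℕ) (p : ℕ × ℕ) : Decidable (SkewCorner lam mu p) :=
  inferInstanceAs (Decidable (_ ∧ _ ∧ _))

lemma mem_skewCells {lam mu : ℕ → ℕ} {r : ℕ} (hAlam : Antitone lam)
    (hr : ∀ i, r ≤ i → lam i = 0) {p : ℕ × ℕ} :
    p ∈ skewCells lam mu r ↔ SkewCell lam mu p := by
  simp only [skewCells, Finset.mem_filter, Finset.mem_product, Finset.mem_range, SkewCell]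
  constructor
  · rintro ⟨_, h⟩; exact h
  · rintro ⟨h1, h2⟩
    have hp1 : p.1 < r := by
      by_contra h; push_neg at h; have := hr p.1 h; omega
    exact ⟨⟨hp1, lt_of_lt_of_le h2 (hAlam (Nat.zero_le p.1))⟩, h1, h2⟩

def toCornerAux (lam mu : ℕ → ℕ) : ℕ → ℕ × ℕ → ℕ × ℕ
  | 0, p => p
  | fuel + 1, p =>
    if SkewCell lam mu (p.1, p.2 + 1) then toCornerAux lam mu fuel (p.1, p.2 + 1)
    else if SkewCell lam mu (p.1 + 1, p.2) then toCornerAux lam mu fuel (p.1 + 1, p.2)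
    else p

lemma toCornerAux_spec (lam mu : ℕ → ℕ) (r : ℕ) (hAlam : Antitone lam)
    (hr : ∀ i, r ≤ i → lam i = 0) :
    ∀ (fuel : ℕ) (p : ℕ × ℕ), SkewCell lam mu p → r + lam 0 ≤ fuel + p.1 + p.2 →
      SkewCorner lam mu (toCornerAux lam mu fuel p) ∧
      ∀ M, IsSSYT lam mu M → M p ≤ M (toCornerAux lam mu fuel p) := by
  intro fuel
  induction fuel with
  | zero =>
    intro p hp hfuel
    exfalso
    have hp1 : p.1 < r := by
      by_contra h; push_neg at h; have := hr p.1 h; have := hp.2; omega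
    have hp2 : p.2 < lam 0 := lt_of_lt_of_le hp.2 (hAlam (Nat.zero_le p.1))
    omega
  | succ fuel ih =>
    intro p hp hfuel
    by_cases hR : SkewCell lam mu (p.1, p.2 + 1)
    · have h := ih (p.1, p.2 + 1) hR (by omega)
      simp only [toCornerAux, if_pos hR]
      refine ⟨h.1, fun M hM => le_trans ?_ (h.2 M hM)⟩
      exact hM.2.2.1 p.1 p.2 hp hR
    · by_cases hD : SkewCell lam mu (p.1 + 1, p.2)
      · have h := ih (p.1 + 1, p.2) hD (by omega)
        simp only [toCornerAux, if_neg hR, if_pos hD]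
        refine ⟨h.1, fun M hM => le_trans ?_ (h.2 M hM)⟩
        exact (hM.2.2.2 p.1 p.2 hp hD).le
      · simp only [toCornerAux, if_neg hR, if_neg hD]
        exact ⟨⟨hp, hD, hR⟩, fun M _ => le_rfl⟩

set_option maxHeartbeats 1000000 in
lemma summable_pi_prod_fin : ∀ (n : ℕ) (f : Fin n → ℕ → ℝ),
    (∀ i k, 0 ≤ f i k) → (∀ i, Summable (f i)) →
    Summable fun m : Fin n → ℕ => ∏ i, f i (m i) := by
  intro n
  induction n with
  | zero =>
    intro f _ _
    haveI : Subsingleton (Fin 0 → ℕ) := ⟨fun a b => funext fun i => i.elim0⟩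
    haveI : Finite (Fin 0 → ℕ) := Finite.of_subsingleton
    exact Summable.of_finite
  | succ n ih =>
    intro f hpos hsum
    have key : Summable fun x : ℕ × (Fin n → ℕ) => f 0 x.1 * ∏ i, f i.succ (x.2 i) := by
      have h2 := ih (fun i => f i.succ) (fun i k => hpos i.succ k) (fun i => hsum i.succ)
      have q1 : (0 : ℕ → ℝ) ≤ f 0 := fun k => hpos 0 k
      have q2 : (0 : (Fin n → ℕ) → ℝ) ≤ fun m => ∏ i, f i.succ (m i) :=
        fun m => Finset.prod_nonneg fun i _ => hpos i.succ (m i)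
      have := Summable.mul_of_nonneg (hsum 0) h2 q1 q2
      exact this
    rw [← (Fin.consEquiv fun _ : Fin (n + 1) => ℕ).summable_iff]
    refine key.congr fun x => ?_
    show f 0 x.1 * ∏ i, f i.succ (x.2 i) = ∏ i, f i ((Fin.cons x.1 x.2 : Fin (n + 1) → ℕ) i)
    rw [Fin.prod_univ_succ]
    simp

lemma summable_pi_prod {ι : Type*} [Fintype ι] (f : ι → ℕ → ℝ)
    (hpos : ∀ i k, 0 ≤ f i k) (hsum : ∀ i, Summable (f i)) :
    Summable fun m : ι → ℕ => ∏ i, f i (m i) := by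
  classical
  obtain e := Fintype.equivFin ι
  have key := summable_pi_prod_fin (Fintype.card ι) (fun j => f (e.symm j))
    (fun j k => hpos _ k) (fun j => hsum _)
  rw [← (Equiv.arrowCongr e (Equiv.refl ℕ)).symm.summable_iff]
  refine key.congr fun m' => ?_
  show ∏ j, f (e.symm j) (m' j)
      = ∏ i, f i ((Equiv.arrowCongr e (Equiv.refl ℕ)).symm m' i)
  refine Fintype.prod_equiv e.symm _ _ fun j => ?_
  congr 1
  simp [Equiv.arrowCongr]

set_option maxHeartbeats 1000000 in
/-- For partitions `μ ⊆ λ`, `δ = λ/μ`, and a tableau of complex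
variables `s ∈ W_δ` (real part `≥ 1` on all boxes of `δ`, `> 1` at the corners of `δ`),
the series defining the skew Schur multiple zeta function
`ζ_δ(s) = Σ_{M ∈ SSYT_δ} Π_{(i,j) ∈ δ} m_{ij}^{-s_{ij}}` converges absolutely. -/
theorem skew_schur_multiple_zeta_abs_convergence
    (lam mu : ℕ → ℕ) (r : ℕ)
    (hAlam : Antitone lam) (hAmu : Antitone mu) (hsub : ∀ i, mu i ≤ lam i)
    (hr : ∀ i, r ≤ i → lam i = 0)
    (s : ℕ × ℕ → ℂ)
    (hW1 : ∀ p, SkewCell lam mu p → ¬ SkewCorner lam mu p → 1 ≤ (s p).re)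
    (hW2 : ∀ p, SkewCorner lam mu p → 1 < (s p).re) :
    Summable fun M : {M : ℕ × ℕ → ℕ // IsSSYT lam mu M} =>
      ‖∏ p ∈ skewCells lam mu r, ((M.1 p : ℂ) ^ (-(s p)))‖ := by
  classical
  by_cases hne : (skewCells lam mu r).Nonempty
  swap
  · rw [Finset.not_nonempty_iff_eq_empty] at hne
    haveI : Subsingleton {M : ℕ × ℕ → ℕ // IsSSYT lam mu M} := by
      constructor
      rintro ⟨M, hM⟩ ⟨M', hM'⟩
      have h0 : ∀ (X : ℕ × ℕ → ℕ), IsSSYT lam mu X → ∀ p, X p = 0 := by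
        intro X hX p
        refine hX.2.1 p fun hc => ?_
        have := (mem_skewCells hAlam hr).2 hc
        rw [hne] at this
        exact absurd this (Finset.notMem_empty p)
      exact Subtype.ext (funext fun p => by show M p = M' p; rw [h0 M hM p, h0 M' hM' p])
    haveI : Finite {M : ℕ × ℕ → ℕ // IsSSYT lam mu M} := Finite.of_subsingleton
    exact Summable.of_finite
  set cells := skewCells lam mu r with hcells
  have hmem : ∀ p, p ∈ cells ↔ SkewCell lam mu p := fun p => mem_skewCells hAlam hr
  set C := cells.filter (fun p => SkewCorner lam mu p) with hCdef
  set κ : ℕ × ℕ → ℕ × ℕ := fun p => toCornerAux lam mu (r + lam 0) p with hκ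
  have hκspec : ∀ p, SkewCell lam mu p → SkewCorner lam mu (κ p) ∧
      ∀ M, IsSSYT lam mu M → M p ≤ M (κ p) := fun p hp =>
    toCornerAux_spec lam mu r hAlam hr (r + lam 0) p hp (by omega)
  have hCne : C.Nonempty := by
    obtain ⟨p, hp⟩ := hne
    have hp' := (hmem p).1 hp
    have h := (hκspec p hp').1
    exact ⟨κ p, Finset.mem_filter.2 ⟨(hmem _).2 h.1, h⟩⟩
  set ε := C.inf' hCne (fun q => (s q).re - 1) with hεdef
  have hε : 0 < ε := by
    rw [hεdef, Finset.lt_inf'_iff]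
    intro q hq
    have := hW2 q (Finset.mem_filter.1 hq).2
    linarith
  have hεle : ∀ q ∈ C, ε ≤ (s q).re - 1 := fun q hq => Finset.inf'_le _ hq
  set N := cells.card with hNdef
  have hNpos : 0 < N := Finset.card_pos.2 hne
  have hNR : (0:ℝ) < N := by exact_mod_cast hNpos
  set ε' : ℝ := ε / (2 * N) with hε'def
  have hε' : 0 < ε' := by
    rw [hε'def]; positivity
  set t : ℕ × ℕ → ℝ := fun p => if SkewCorner lam mu p then 1 + ε / 2 else 1 + ε' with htdef
  have ht1 : ∀ p, 1 < t p := by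
    intro p
    by_cases h : SkewCorner lam mu p <;> simp only [htdef, h, if_true, if_false] <;> linarith
  have key : ∀ M : {M : ℕ × ℕ → ℕ // IsSSYT lam mu M},
      ‖∏ p ∈ cells, ((M.1 p : ℂ) ^ (-(s p)))‖ ≤ ∏ p ∈ cells, ((M.1 p : ℝ) ^ (-(t p))) := by
    rintro ⟨M, hM⟩
    have hMpos : ∀ p ∈ cells, 0 < M p := fun p hp => hM.1 p ((hmem p).1 hp)
    have hm1 : ∀ p ∈ cells, (1:ℝ) ≤ (M p : ℝ) := fun p hp => by exact_mod_cast hMpos p hp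
    have hnorm : ‖∏ p ∈ cells, ((M p : ℂ) ^ (-(s p)))‖
        = ∏ p ∈ cells, ((M p : ℝ) ^ (-(s p).re)) := by
      rw [norm_prod]
      refine Finset.prod_congr rfl fun p hp => ?_
      rw [Complex.norm_natCast_cpow_of_pos (hMpos p hp), Complex.neg_re]
    show ‖∏ p ∈ cells, ((M p : ℂ) ^ (-(s p)))‖ ≤ ∏ p ∈ cells, ((M p : ℝ) ^ (-(t p)))
    rw [hnorm]
    have split : ∀ p ∈ cells, (M p : ℝ) ^ (-(s p).re)
        = (M p : ℝ) ^ (-(t p)) * (M p : ℝ) ^ (t p - (s p).re) := by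
      intro p hp
      rw [← Real.rpow_add (by exact_mod_cast hMpos p hp)]
      ring_nf
    rw [Finset.prod_congr rfl split, Finset.prod_mul_distrib]
    have hrest : ∏ p ∈ cells, (M p : ℝ) ^ (t p - (s p).re) ≤ 1 := by
      rw [← Finset.prod_filter_mul_prod_filter_not cells (fun p => SkewCorner lam mu p)]
      have hCbound : ∏ q ∈ C, (M q : ℝ) ^ (t q - (s q).re)
          ≤ ∏ q ∈ C, (M q : ℝ) ^ (-(ε/2)) := by
        refine Finset.prod_le_prod (fun q _ => Real.rpow_nonneg (Nat.cast_nonneg _) _) ?_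
        intro q hq
        refine Real.rpow_le_rpow_of_exponent_le (hm1 q (Finset.mem_filter.1 hq).1) ?_
        have h1 := hεle q hq
        have h2 : t q = 1 + ε / 2 := by
          simp only [htdef, if_pos (Finset.mem_filter.1 hq).2]
        rw [h2]; linarith
      set NC := cells.filter (fun p => ¬ SkewCorner lam mu p) with hNCdef
      set K := NC.card with hKdef
      have hKN : (K:ℝ) ≤ N := by
        have : K ≤ N := Finset.card_filter_le _ _
        exact_mod_cast this
      have hNCbound : ∏ p ∈ NC, (M p : ℝ) ^ (t p - (s p).re)
          ≤ ∏ q ∈ C, (M q : ℝ) ^ (ε' * K) := by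
        have step : ∏ p ∈ NC, (M p : ℝ) ^ (t p - (s p).re)
            ≤ ∏ p ∈ NC, ∏ q ∈ C, (M q : ℝ) ^ ε' := by
          refine Finset.prod_le_prod (fun p _ => Real.rpow_nonneg (Nat.cast_nonneg _) _) ?_
          intro p hp
          have hp' := Finset.mem_filter.1 hp
          have hcell := (hmem p).1 hp'.1
          have h1 : (M p : ℝ) ^ (t p - (s p).re) ≤ (M p : ℝ) ^ ε' := by
            refine Real.rpow_le_rpow_of_exponent_le (hm1 p hp'.1) ?_
            have hs1 := hW1 p hcell hp'.2
            have h2 : t p = 1 + ε' := by simp only [htdef, if_neg hp'.2]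
            rw [h2]; linarith
          have h2 : (M p : ℝ) ^ ε' ≤ (M (κ p) : ℝ) ^ ε' := by
            refine Real.rpow_le_rpow (Nat.cast_nonneg _) ?_ hε'.le
            exact_mod_cast (hκspec p hcell).2 M hM
          have hκC : κ p ∈ C := by
            have h := (hκspec p hcell).1
            exact Finset.mem_filter.2 ⟨(hmem _).2 h.1, h⟩
          have h3 : (M (κ p) : ℝ) ^ ε' ≤ ∏ q ∈ C, (M q : ℝ) ^ ε' := by
            have hone : (1:ℝ) ≤ ∏ q ∈ C.erase (κ p), (M q : ℝ) ^ ε' := by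
              have hb := Finset.prod_le_prod (s := C.erase (κ p)) (f := fun _ => (1:ℝ))
                (g := fun q => (M q : ℝ) ^ ε') (fun _ _ => zero_le_one) (fun q hq => ?_)
              · simpa using hb
              · have := hm1 q (Finset.mem_filter.1 (Finset.mem_of_mem_erase hq)).1
                calc (1:ℝ) = (1:ℝ) ^ ε' := (Real.one_rpow _).symm
                _ ≤ (M q : ℝ) ^ ε' := Real.rpow_le_rpow zero_le_one this hε'.le
            rw [← Finset.mul_prod_erase C _ hκC]
            exact le_mul_of_one_le_right (Real.rpow_nonneg (Nat.cast_nonneg _) _) hone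
          linarith
        refine le_trans step (le_of_eq ?_)
        rw [Finset.prod_const, ← Finset.prod_pow]
        refine Finset.prod_congr rfl fun q hq => ?_
        rw [← Real.rpow_natCast ((M q : ℝ) ^ ε') K, ← Real.rpow_mul (Nat.cast_nonneg _)]
      have last : (∏ q ∈ C, (M q : ℝ) ^ (-(ε/2))) * (∏ q ∈ C, (M q : ℝ) ^ (ε' * K)) ≤ 1 := by
        rw [← Finset.prod_mul_distrib]
        refine Finset.prod_le_one (fun q hq => by positivity) ?_
        intro q hq
        have h1 := hm1 q (Finset.mem_filter.1 hq).1
        rw [← Real.rpow_add (by linarith)]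
        refine Real.rpow_le_one_of_one_le_of_nonpos h1 ?_
        have h2 : ε' * K ≤ ε' * N := mul_le_mul_of_nonneg_left hKN hε'.le
        have h3 : ε' * N = ε / 2 := by
          rw [hε'def]; field_simp
        linarith
      calc (∏ q ∈ C, (M q : ℝ) ^ (t q - (s q).re)) * ∏ p ∈ NC, (M p : ℝ) ^ (t p - (s p).re)
          ≤ (∏ q ∈ C, (M q : ℝ) ^ (-(ε/2))) * (∏ q ∈ C, (M q : ℝ) ^ (ε' * K)) := by
            refine mul_le_mul hCbound hNCbound ?_ ?_
            · exact Finset.prod_nonneg fun p _ => Real.rpow_nonneg (Nat.cast_nonneg _) _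
            · exact Finset.prod_nonneg fun q _ => Real.rpow_nonneg (Nat.cast_nonneg _) _
        _ ≤ 1 := last
    have hnn : 0 ≤ ∏ p ∈ cells, (M p : ℝ) ^ (-(t p)) :=
      Finset.prod_nonneg fun p _ => Real.rpow_nonneg (Nat.cast_nonneg _) _
    calc (∏ p ∈ cells, (M p : ℝ) ^ (-(t p))) * ∏ p ∈ cells, (M p : ℝ) ^ (t p - (s p).re)
        ≤ (∏ p ∈ cells, (M p : ℝ) ^ (-(t p))) * 1 := mul_le_mul_of_nonneg_left hrest hnn
      _ = _ := mul_one _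
  have hsummaj : Summable fun M : {M : ℕ × ℕ → ℕ // IsSSYT lam mu M} =>
      ∏ p ∈ cells, ((M.1 p : ℝ) ^ (-(t p))) := by
    have hG : Summable fun m : {x // x ∈ cells} → ℕ =>
        ∏ p : {x // x ∈ cells}, ((m p : ℝ) ^ (-(t p.1))) :=
      by
      have h := summable_pi_prod (fun (p : {x // x ∈ cells}) (k : ℕ) => (k : ℝ) ^ (-(t p.1)))
        (fun p k => Real.rpow_nonneg (Nat.cast_nonneg _) _)
        (fun p => Real.summable_nat_rpow.2 (by have := ht1 p.1; linarith))
      exact h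
    have hinj : Function.Injective
        (fun (M : {M : ℕ × ℕ → ℕ // IsSSYT lam mu M}) (p : {x // x ∈ cells}) => M.1 p.1) := by
      intro M M' h
      apply Subtype.ext; funext q
      by_cases hq : SkewCell lam mu q
      · exact congrFun h ⟨q, (hmem q).2 hq⟩
      · rw [M.2.2.1 q hq, M'.2.2.1 q hq]
    have hcomp := hG.comp_injective hinj
    refine hcomp.congr fun M => ?_
    show ∏ p : {x // x ∈ cells}, ((M.1 p.1 : ℝ) ^ (-(t p.1)))
        = ∏ p ∈ cells, ((M.1 p : ℝ) ^ (-(t p)))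
    exact Finset.prod_coe_sort cells (fun p => (M.1 p : ℝ) ^ (-(t p)))
  exact Summable.of_nonneg_of_le (fun M => norm_nonneg _) key hsummaj
end
end

section
/- (Duality formula for multiple zeta values) For any admissible index k and its dual index k†, one has ζ(k) = ζ(k†). -/
noncomputable section

/-- The multiple zeta value `ζ(a 0, …, a (n-1)) = Σ_{0<m_1<⋯<m_n} Π m_i^{-a_i}`
(`a 0` is paired with the smallest summation variable). -/
def mz (n : ℕ) (a : Fin n → ℂ) : ℂ :=
  ∑' m : {m : Fin n → ℕ // StrictMono m ∧ ∀ i, 0 < m i},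
    ∏ i, ((m.1 i : ℂ) ^ (-(a i)))

/-- The multiple zeta value of an index given as a list of natural numbers. -/
def mzl (k : List ℕ) : ℂ := mz k.length fun i => (k.get i : ℂ)

/-- The admissible piece `A(a,b) = (1,…,1 (a−1 times), b+1)`. -/
def pieceL (a b : ℕ) : List ℕ := List.replicate (a - 1) 1 ++ [b + 1]

/-- The admissible index `(1^{a_1−1}, b_1+1, …, 1^{a_m−1}, b_m+1)`. -/
def idxOf (m : ℕ) (a b : ℕ → ℕ) : List ℕ :=
  (List.range m).flatMap fun i => pieceL (a i) (b i)

/-- The dual index `(1^{b_m−1}, a_m+1, …, 1^{b_1−1}, a_1+1)`. -/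
def dualIdxOf (m : ℕ) (a b : ℕ → ℕ) : List ℕ :=
  (List.range m).reverse.flatMap fun i => pieceL (b i) (a i)

open scoped ENNReal NNReal
open Filter

/-- real connector c(m,n) = m! n! / (m+n)! -/
def cR (m n : ℕ) : ℝ := (m.factorial * n.factorial : ℝ) / ((m+n).factorial)

lemma cR_nonneg (m n : ℕ) : 0 ≤ cR m n := by
  unfold cR; positivity

lemma cR_symm (m n : ℕ) : cR m n = cR n m := by
  unfold cR; rw [mul_comm, add_comm]

lemma cR_zero (m : ℕ) : cR m 0 = 1 := by
  unfold cR
  rw [Nat.factorial_zero, add_zero]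
  field_simp
  simp

lemma cR_le (M n : ℕ) (hM : 1 ≤ M) : cR M n ≤ (M.factorial : ℝ) / (n+1) := by
  unfold cR
  rw [div_le_div_iff₀ (by positivity) (by positivity)]
  have h : (n+1) * n.factorial ≤ (M+n).factorial := by
    calc (n+1) * n.factorial = (n+1).factorial := rfl
    _ ≤ (M+n).factorial := Nat.factorial_le (by omega)
  calc (M.factorial * n.factorial : ℝ) * (n+1) = M.factorial * ((n+1) * n.factorial) := by ring
  _ ≤ M.factorial * (M+n).factorial := by
      gcongr
      exact_mod_cast h
  _ = (M.factorial:ℝ) * (M+n).factorial := rfl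

/-- telescoping step: c(M,n)/M = c(M,n+1)/M + c(M,n+1)/(n+1) -/
lemma cR_step (M n : ℕ) (hM : 1 ≤ M) :
    cR M n / M = cR M (n+1) / M + cR M (n+1) / (n+1) := by
  unfold cR
  have h1 : ((M+n).factorial : ℝ) ≠ 0 := by positivity
  have h2 : ((M+(n+1)).factorial : ℝ) ≠ 0 := by positivity
  have h3 : (M:ℝ) ≠ 0 := by positivity
  have h4 : ((n:ℝ)+1) ≠ 0 := by positivity
  have hfac : ((M+(n+1)).factorial : ℝ) = (M+n+1) * (M+n).factorial := by
    have : M+(n+1) = (M+n)+1 := by ring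
    rw [this, Nat.factorial_succ]; push_cast; ring
  have hfac2 : ((n+1).factorial : ℝ) = (n+1) * n.factorial := by
    rw [Nat.factorial_succ]; push_cast; ring
  rw [hfac]
  push_cast [hfac2]
  field_simp
  ring

lemma cR_tendsto (M : ℕ) (hM : 1 ≤ M) :
    Tendsto (fun n : ℕ => cR M n / M) atTop (nhds 0) := by
  apply squeeze_zero (fun n => div_nonneg (cR_nonneg M n) (Nat.cast_nonneg M))
    (g := fun n : ℕ => (M.factorial : ℝ) / (n+1))
  · intro n
    calc cR M n / M ≤ cR M n := by
          apply div_le_self (cR_nonneg M n); exact_mod_cast hM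
    _ ≤ (M.factorial : ℝ) / (n+1) := cR_le M n hM
  · have h := (tendsto_const_div_atTop_nhds_zero_nat (M.factorial : ℝ)).comp
      (tendsto_add_atTop_nat 1)
    apply h.congr
    intro n
    simp only [Function.comp]
    push_cast
    ring

lemma key_real (M N : ℕ) (hM : 1 ≤ M) :
    HasSum (fun n : ℕ => if N < n then cR M n / n else 0) (cR M N / M) := by
  set f : ℕ → ℝ := fun n => if N < n then cR M n / n else 0 with hf
  have hnn : ∀ n, 0 ≤ f n := by
    intro n; simp only [hf]; split
    · exact div_nonneg (cR_nonneg M n) (Nat.cast_nonneg n)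
    · exact le_refl 0
  rw [hasSum_iff_tendsto_nat_of_nonneg hnn]
  have hpart : ∀ j : ℕ, ∑ n ∈ Finset.range (N+1+j), f n + cR M (N+j) / M = cR M N / M := by
    intro j
    induction j with
    | zero =>
      have : ∑ n ∈ Finset.range (N+1+0), f n = 0 := by
        apply Finset.sum_eq_zero
        intro n hn
        simp only [Finset.mem_range] at hn
        simp only [hf]; rw [if_neg (by omega)]
      rw [this]; simp
    | succ j ih =>
      have hrange : N+1+(j+1) = (N+1+j) + 1 := by omega
      rw [hrange, Finset.sum_range_succ]
      have hfval : f (N+1+j) = cR M (N+1+j) / (N+1+j) := by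
        simp only [hf]; rw [if_pos (by omega)]
        push_cast; ring_nf
      rw [hfval]
      have hstep := cR_step M (N+j) hM
      have hNj : N+1+j = (N+j)+1 := by omega
      rw [hNj]
      have e1 : N + (j+1) = N+j+1 := by omega
      rw [e1] at *
      push_cast at hstep ih ⊢
      ring_nf at hstep ih ⊢
      linarith [hstep, ih]
  have heq : ∀ J : ℕ, N+1 ≤ J → ∑ n ∈ Finset.range J, f n = cR M N / M - cR M (N+(J-(N+1))) / M := by
    intro J hJ
    have := hpart (J-(N+1))
    have h2 : N+1+(J-(N+1)) = J := by omega
    rw [h2] at this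
    linarith
  have htend : Tendsto (fun J : ℕ => cR M N / M - cR M (N+(J-(N+1))) / M) atTop (nhds (cR M N / M)) := by
    have h0 : Tendsto (fun J : ℕ => cR M (N+(J-(N+1))) / M) atTop (nhds 0) := by
      apply (cR_tendsto M hM).comp
      apply tendsto_atTop_atTop.mpr
      intro b; exact ⟨N+1+b, fun a ha => by omega⟩
    simpa using (tendsto_const_nhds (x := cR M N / M)).sub h0
  apply htend.congr'
  filter_upwards [eventually_ge_atTop (N+1)] with J hJ
  exact (heq J hJ).symm

/-- inverse power in `ℝ≥0∞` -/
def pw (m c : ℕ) : ℝ≥0∞ := ((m : ℝ≥0∞) ^ c)⁻¹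

/-- connector in `ℝ≥0∞` -/
def CC (m n : ℕ) : ℝ≥0∞ := ENNReal.ofReal (cR m n)

lemma CC_symm (m n : ℕ) : CC m n = CC n m := by unfold CC; rw [cR_symm]

lemma CC_zero (m : ℕ) : CC m 0 = 1 := by unfold CC; rw [cR_zero]; simp

lemma pw_one (m : ℕ) : pw m 1 = (m : ℝ≥0∞)⁻¹ := by simp [pw]

lemma pw_succ (m c : ℕ) : pw m (c+1) = pw m c * pw m 1 := by
  unfold pw
  rw [pow_succ, pow_one, ENNReal.mul_inv (Or.inr (ENNReal.natCast_ne_top m))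
    (Or.inl (ENNReal.pow_ne_top (ENNReal.natCast_ne_top m)))]

lemma key1 (M N : ℕ) (hM : 0 < M) :
    ∑' n : ℕ, (if N < n then CC M n * pw n 1 else 0) = CC M N * pw M 1 := by
  have hks := key_real M N hM
  have hsum : Summable (fun n : ℕ => if N < n then cR M n / n else 0) := hks.summable
  have hnn : ∀ n : ℕ, 0 ≤ (if N < n then cR M n / n else 0) := by
    intro n; split
    · exact div_nonneg (cR_nonneg M n) (Nat.cast_nonneg n)
    · exact le_refl 0
  have hterm : ∀ n : ℕ, (if N < n then CC M n * pw n 1 else 0)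
      = ENNReal.ofReal (if N < n then cR M n / n else 0) := by
    intro n
    by_cases h : N < n
    · rw [if_pos h, if_pos h, CC, pw_one, ENNReal.ofReal_div_of_pos (by exact_mod_cast h.trans_le' (Nat.zero_le N)), div_eq_mul_inv, ENNReal.ofReal_natCast]
    · rw [if_neg h, if_neg h, ENNReal.ofReal_zero]
  calc ∑' n : ℕ, (if N < n then CC M n * pw n 1 else 0)
      = ∑' n : ℕ, ENNReal.ofReal (if N < n then cR M n / n else 0) := tsum_congr hterm
    _ = ENNReal.ofReal (∑' n : ℕ, (if N < n then cR M n / n else 0)) :=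
        (ENNReal.ofReal_tsum_of_nonneg hnn hsum).symm
    _ = ENNReal.ofReal (cR M N / M) := by rw [hks.tsum_eq]
    _ = CC M N * pw M 1 := by
        rw [CC, pw_one, ENNReal.ofReal_div_of_pos (by exact_mod_cast hM), div_eq_mul_inv,
          ENNReal.ofReal_natCast]

/-- the chain-sum weight: `gw k M` = sum over strictly increasing positive chains whose
largest element is `M`, of the product of inverse powers (the list `k` is given with the
exponent of the LARGEST variable first). -/
def gw : List ℕ → ℕ → ℝ≥0∞
  | [], M => if M = 0 then 1 else 0
  | c :: k, M => if 0 < M then pw M c * ∑' N : ℕ, (if N < M then gw k N else 0) else 0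

lemma gw_cons (c : ℕ) (k : List ℕ) (M : ℕ) :
    gw (c :: k) M = if 0 < M then pw M c * ∑' N : ℕ, (if N < M then gw k N else 0) else 0 := rfl

/-- the connected sum -/
def DD (kr lr : List ℕ) : ℝ≥0∞ := ∑' M : ℕ, ∑' N : ℕ, gw kr M * gw lr N * CC M N

/-- the (reversed-index) multiple zeta value in `ℝ≥0∞` -/
def zet (kr : List ℕ) : ℝ≥0∞ := ∑' M : ℕ, gw kr M

lemma DD_symm (kr lr : List ℕ) : DD kr lr = DD lr kr := by
  unfold DD
  rw [ENNReal.tsum_comm]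
  refine tsum_congr fun N => tsum_congr fun M => ?_
  rw [CC_symm]; ring

lemma DD_nil_right (kr : List ℕ) : DD kr [] = zet kr := by
  unfold DD zet
  refine tsum_congr fun M => ?_
  rw [tsum_eq_single 0 (by intro n hn; simp [gw, hn])]
  simp [gw, CC_zero]

lemma transport (c : ℕ) (k lr : List ℕ) : DD ((c+1) :: k) lr = DD (c :: k) (1 :: lr) := by
  unfold DD
  refine tsum_congr fun M => ?_
  by_cases hM : 0 < M
  swap
  · refine tsum_congr fun N => ?_
    simp [gw_cons, if_neg hM]
  -- abbreviations
  set A : ℝ≥0∞ := pw M c * ∑' N : ℕ, (if N < M then gw k N else 0) with hA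
  have hgl : gw ((c+1) :: k) M = pw M 1 * A := by
    rw [gw_cons, if_pos hM, hA, pw_succ]; ring
  have hgr : gw (c :: k) M = A := by rw [gw_cons, if_pos hM]
  -- per-N' flattening on the RHS
  have step1 : ∀ N' : ℕ, gw (c :: k) M * gw (1 :: lr) N' * CC M N'
      = ∑' N : ℕ, if N < N' then A * gw lr N * (CC M N' * pw N' 1) else 0 := by
    intro N'
    rw [hgr, gw_cons]
    by_cases h : 0 < N'
    · rw [if_pos h]
      have : A * (pw N' 1 * ∑' N : ℕ, (if N < N' then gw lr N else 0)) * CC M N'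
          = (A * (CC M N' * pw N' 1)) * ∑' N : ℕ, (if N < N' then gw lr N else 0) := by ring
      rw [this, ← ENNReal.tsum_mul_left]
      refine tsum_congr fun N => ?_
      by_cases hN : N < N'
      · rw [if_pos hN, if_pos hN]
        try ring
      · rw [if_neg hN, if_neg hN, mul_zero]
    · rw [if_neg h, mul_zero, zero_mul]
      have hN' : N' = 0 := by omega
      subst hN'
      rw [tsum_eq_single 0 (fun n hn => by rw [if_neg (by omega)])]
      rw [if_neg (by omega)]
  calc ∑' N : ℕ, gw ((c+1) :: k) M * gw lr N * CC M N
      = ∑' N : ℕ, A * gw lr N * (CC M N * pw M 1) := by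
        refine tsum_congr fun N => ?_
        rw [hgl]; ring
    _ = ∑' N : ℕ, ∑' N' : ℕ, (if N < N' then A * gw lr N * (CC M N' * pw N' 1) else 0) := by
        refine tsum_congr fun N => ?_
        have : ∑' N' : ℕ, (if N < N' then A * gw lr N * (CC M N' * pw N' 1) else 0)
            = (A * gw lr N) * ∑' N' : ℕ, (if N < N' then CC M N' * pw N' 1 else 0) := by
          rw [← ENNReal.tsum_mul_left]
          refine tsum_congr fun N' => ?_
          by_cases hN' : N < N'
          · rw [if_pos hN', if_pos hN']
            try ring
          · rw [if_neg hN', if_neg hN', mul_zero]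
        rw [this, key1 M N hM]
        try ring
    _ = ∑' N' : ℕ, ∑' N : ℕ, (if N < N' then A * gw lr N * (CC M N' * pw N' 1) else 0) :=
        ENNReal.tsum_comm
    _ = ∑' N' : ℕ, gw (c :: k) M * gw (1 :: lr) N' * CC M N' :=
        tsum_congr fun N' => (step1 N').symm

lemma transport' (d : ℕ) (k l : List ℕ) : DD (1 :: k) (d :: l) = DD k ((d+1) :: l) := by
  rw [DD_symm, ← transport, DD_symm]

lemma transport_ones (b : ℕ) (t lr : List ℕ) :
    DD ((b+1) :: t) lr = DD (1 :: t) (List.replicate b 1 ++ lr) := by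
  induction b generalizing lr with
  | zero => simp
  | succ b ih =>
    have h1 : DD ((b+1+1) :: t) lr = DD ((b+1) :: t) (1 :: lr) := transport (b+1) t lr
    rw [h1, ih (1 :: lr)]
    congr 1
    rw [List.replicate_succ' , List.append_assoc]
    rfl

lemma transport_up (aa : ℕ) (t l : List ℕ) (d : ℕ) :
    DD (List.replicate aa 1 ++ t) (d :: l) = DD t ((d+aa) :: l) := by
  induction aa generalizing d with
  | zero => simp
  | succ aa ih =>
    rw [List.replicate_succ, List.cons_append, transport' d _ l, ih (d+1)]
    congr 2
    omega

lemma pieceL_reverse (a b : ℕ) : (pieceL a b).reverse = (b+1) :: List.replicate (a-1) 1 := by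
  unfold pieceL
  rw [List.reverse_append, List.reverse_replicate]
  rfl

lemma piece_step (a b : ℕ) (ha : 1 ≤ a) (hb : 1 ≤ b) (t lr : List ℕ) :
    DD ((pieceL a b).reverse ++ t) lr = DD t ((pieceL b a).reverse ++ lr) := by
  rw [pieceL_reverse, pieceL_reverse, List.cons_append, transport_ones b _ lr]
  have h1 : (1 : ℕ) :: (List.replicate (a-1) 1 ++ t) = List.replicate a 1 ++ t := by
    rw [← List.cons_append]
    congr 1
    rw [← List.replicate_succ]
    congr 1
    omega
  have h2 : List.replicate b 1 ++ lr = 1 :: (List.replicate (b-1) 1 ++ lr) := by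
    rw [← List.cons_append]
    congr 1
    rw [← List.replicate_succ]
    congr 1
    omega
  rw [h1, h2, transport_up a t _ 1]
  congr 2
  omega

lemma idxOf_succ (m : ℕ) (a b : ℕ → ℕ) :
    idxOf (m+1) a b = idxOf m a b ++ pieceL (a m) (b m) := by
  unfold idxOf
  rw [List.range_succ, List.flatMap_append]
  simp

lemma dualIdxOf_succ (m : ℕ) (a b : ℕ → ℕ) :
    dualIdxOf (m+1) a b = pieceL (b m) (a m) ++ dualIdxOf m a b := by
  unfold dualIdxOf
  rw [List.range_succ, List.reverse_append]
  simp

lemma DD_duality (m : ℕ) (a b : ℕ → ℕ) (ha : ∀ i < m, 1 ≤ a i) (hb : ∀ i < m, 1 ≤ b i) :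
    ∀ lr, DD ((idxOf m a b).reverse) lr = DD [] ((dualIdxOf m a b).reverse ++ lr) := by
  induction m with
  | zero => intro lr; simp [idxOf, dualIdxOf]
  | succ m ih =>
    intro lr
    rw [idxOf_succ, dualIdxOf_succ, List.reverse_append, List.reverse_append]
    rw [List.append_assoc]
    rw [piece_step (a m) (b m) (ha m (by omega)) (hb m (by omega))]
    rw [ih (fun i hi => ha i (by omega)) (fun i hi => hb i (by omega))]
    try rw [List.append_assoc]

lemma zet_duality (m : ℕ) (a b : ℕ → ℕ) (ha : ∀ i < m, 1 ≤ a i) (hb : ∀ i < m, 1 ≤ b i) :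
    zet ((idxOf m a b).reverse) = zet ((dualIdxOf m a b).reverse) := by
  rw [← DD_nil_right, DD_duality m a b ha hb [], List.append_nil, DD_symm, DD_nil_right]

/-- bounded chains -/
def ChainT (n : ℕ) (M : ℕ∞) : Type :=
  {f : Fin n → ℕ // StrictMono f ∧ (∀ i, 0 < f i) ∧ ∀ i, (f i : ℕ∞) < M}

lemma strictMono_snoc {n : ℕ} (g : Fin n → ℕ) (m : ℕ) (hg : StrictMono g)
    (hlt : ∀ i, g i < m) : StrictMono (Fin.snoc g m) := by
  intro x y hxy
  rcases Fin.eq_castSucc_or_eq_last y with ⟨y', rfl⟩ | rfl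
  · have hx : ∃ x' : Fin n, x = Fin.castSucc x' := by
      rcases Fin.eq_castSucc_or_eq_last x with ⟨x', rfl⟩ | rfl
      · exact ⟨x', rfl⟩
      · exact absurd hxy (not_lt.mpr (Fin.castSucc_lt_last y').le)
    obtain ⟨x', rfl⟩ := hx
    rw [Fin.snoc_castSucc, Fin.snoc_castSucc]
    exact hg (Fin.castSucc_lt_castSucc_iff.mp hxy)
  · rcases Fin.eq_castSucc_or_eq_last x with ⟨x', rfl⟩ | rfl
    · rw [Fin.snoc_castSucc, Fin.snoc_last]
      exact hlt x'
    · exact absurd hxy (lt_irrefl _)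

/-- splitting equivalence: peel off the top (largest) element of a chain -/
def chainEquiv (n : ℕ) (M : ℕ∞) :
    ChainT (n+1) M ≃ (Σ m : {m : ℕ // 0 < m ∧ (m : ℕ∞) < M}, ChainT n (m.1 : ℕ∞)) where
  toFun f := ⟨⟨f.1 (Fin.last n), f.2.2.1 _, f.2.2.2 _⟩,
    ⟨Fin.init f.1, fun x y hxy => f.2.1 (Fin.castSucc_lt_castSucc_iff.mpr hxy),
      fun i => f.2.2.1 _,
      fun i => by
        have := f.2.1 (Fin.castSucc_lt_last i)
        exact_mod_cast this⟩⟩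
  invFun p := ⟨Fin.snoc p.2.1 p.1.1,
    strictMono_snoc _ _ p.2.2.1 (fun i => by
      have := p.2.2.2.2 i
      exact_mod_cast this),
    fun i => by
      rcases Fin.eq_castSucc_or_eq_last i with ⟨j, rfl⟩ | rfl
      · rw [Fin.snoc_castSucc]; exact p.2.2.2.1 j
      · rw [Fin.snoc_last]; exact p.1.2.1,
    fun i => by
      rcases Fin.eq_castSucc_or_eq_last i with ⟨j, rfl⟩ | rfl
      · rw [Fin.snoc_castSucc]
        exact lt_trans (by exact_mod_cast p.2.2.2.2 j) p.1.2.2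
      · rw [Fin.snoc_last]; exact p.1.2.2⟩
  left_inv f := by
    apply Subtype.ext
    exact Fin.snoc_init_self f.1
  right_inv p := by
    obtain ⟨⟨m, hm⟩, g, hg⟩ := p
    have h1 : (Fin.snoc g m : Fin (n+1) → ℕ) (Fin.last n) = m := Fin.snoc_last _ _
    refine Sigma.ext (Subtype.ext ?_) ((Subtype.heq_iff_coe_eq ?_).mpr ?_)
    · exact h1
    · intro x
      simp only [Fin.snoc_last]
    · beta_reduce
      exact Fin.init_snoc (α := fun _ : Fin (n+1) => ℕ) m g

def bcs (n : ℕ) (k : Fin n → ℕ) (M : ℕ∞) : ℝ≥0∞ :=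
  ∑' f : ChainT n M, ∏ i, pw (f.1 i) (k i)

lemma bcs_succ (n : ℕ) (k : Fin (n+1) → ℕ) (M : ℕ∞) :
    bcs (n+1) k M = ∑' m : ℕ, if 0 < m ∧ (m : ℕ∞) < M then
      pw m (k (Fin.last n)) * bcs n (fun i => k i.castSucc) (m : ℕ∞) else 0 := by
  have hL : bcs (n+1) k M
      = ∑' p : (Σ mm : {m : ℕ // 0 < m ∧ (m : ℕ∞) < M}, ChainT n (mm.1 : ℕ∞)),
          ∏ i, pw (((chainEquiv n M).symm p).1 i) (k i) :=
    (Equiv.tsum_eq (chainEquiv n M).symm (fun f : ChainT (n+1) M => ∏ i, pw (f.1 i) (k i))).symm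
  rw [hL, ENNReal.tsum_sigma']
  rw [← tsum_subtype_eq_of_support_subset (s := {m : ℕ | 0 < m ∧ (m : ℕ∞) < M})
    (f := fun m : ℕ => if 0 < m ∧ (m : ℕ∞) < M then
      pw m (k (Fin.last n)) * bcs n (fun i => k i.castSucc) (m : ℕ∞) else 0)
    (by
      intro m hm
      by_contra hc
      apply hm
      simp only [Set.mem_setOf_eq] at hc
      exact if_neg hc)]
  refine tsum_congr fun mm => ?_
  rw [if_pos mm.2]
  unfold bcs
  rw [← ENNReal.tsum_mul_left]
  refine tsum_congr fun g => ?_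
  have hval : ((chainEquiv n M).symm ⟨mm, g⟩).1 = Fin.snoc g.1 mm.1 := rfl
  rw [hval, Fin.prod_univ_castSucc]
  simp only [Fin.snoc_castSucc, Fin.snoc_last]
  ring

def GGE (kr : List ℕ) (M : ℕ∞) : ℝ≥0∞ := ∑' N : ℕ, if (N : ℕ∞) < M then gw kr N else 0

instance (M : ℕ∞) : Unique (ChainT 0 M) where
  default := ⟨fun i => i.elim0, fun x => x.elim0, fun i => i.elim0, fun i => i.elim0⟩
  uniq := fun f => Subtype.ext (funext fun i => i.elim0)

lemma claimA : ∀ (n : ℕ) (k : Fin n → ℕ) (M : ℕ∞), 0 < M →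
    bcs n k M = GGE ((List.ofFn k).reverse) M := by
  intro n
  induction n with
  | zero =>
    intro k M hM
    have h1 : bcs 0 k M = 1 := by
      unfold bcs
      rw [tsum_eq_single (default : ChainT 0 M) (fun b hb => absurd (Subsingleton.elim b default) hb)]
      simp
    rw [h1, List.ofFn_zero, List.reverse_nil]
    unfold GGE
    rw [tsum_eq_single 0 (by
      intro N hN
      by_cases h : ((N:ℕ∞) < M)
      · rw [if_pos h]; simp [gw, hN]
      · rw [if_neg h])]
    rw [if_pos (by exact_mod_cast hM)]
    simp [gw]
  | succ n ih =>
    intro k M hM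
    rw [bcs_succ]
    have hofn : (List.ofFn k).reverse = k (Fin.last n) :: (List.ofFn fun i => k i.castSucc).reverse := by
      rw [List.ofFn_succ']
      simp [List.reverse_concat]
    rw [hofn]
    unfold GGE
    refine tsum_congr fun N => ?_
    by_cases hN : 0 < N ∧ (N : ℕ∞) < M
    · rw [if_pos hN, if_pos hN.2, gw_cons, if_pos hN.1]
      rw [ih (fun i => k i.castSucc) (N : ℕ∞) (by exact_mod_cast hN.1)]
      congr 1
      unfold GGE
      refine tsum_congr fun N' => ?_
      congr 1
      simp [Nat.cast_lt]
    · rw [if_neg hN]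
      by_cases h2 : (N : ℕ∞) < M
      · rw [if_pos h2, gw_cons, if_neg (by
          intro h0
          exact hN ⟨h0, h2⟩)]
      · rw [if_neg h2]

lemma chain_top (n : ℕ) (k : Fin n → ℕ) :
    bcs n k ⊤ = zet ((List.ofFn k).reverse) := by
  rw [claimA n k ⊤ (by simp)]
  unfold GGE zet
  refine tsum_congr fun N => ?_
  have hne : (N : ℕ∞) ≠ ⊤ := by simp
  rw [if_pos (lt_top_iff_ne_top.mpr hne)]

lemma mzE_eq (K : List ℕ) :
    ∑' m : {m : Fin K.length → ℕ // StrictMono m ∧ ∀ i, 0 < m i},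
      ∏ i, pw (m.1 i) (K.get i) = zet K.reverse := by
  let he : {m : Fin K.length → ℕ // StrictMono m ∧ ∀ i, 0 < m i} ≃ ChainT K.length ⊤ :=
    ⟨fun f => ⟨f.1, f.2.1, f.2.2, fun i => lt_top_iff_ne_top.mpr (by simp)⟩,
     fun f => ⟨f.1, f.2.1, f.2.2.1⟩, fun f => rfl, fun f => rfl⟩
  rw [← Equiv.tsum_eq he.symm (fun m => ∏ i, pw (m.1 i) (K.get i))]
  have : ∀ f : ChainT K.length ⊤, (he.symm f).1 = f.1 := fun f => rfl
  calc ∑' f : ChainT K.length ⊤, ∏ i, pw ((he.symm f).1 i) (K.get i)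
      = bcs K.length (fun i => K.get i) ⊤ := by
        refine tsum_congr fun f => ?_
        rw [this f]
    _ = zet ((List.ofFn fun i => K.get i).reverse) := chain_top _ _
    _ = zet K.reverse := by rw [List.ofFn_get]

lemma tsum_nnreal_bridge {ι κ : Type} (f : ι → ℝ≥0) (g : κ → ℝ≥0)
    (h : ∑' i, (f i : ℝ≥0∞) = ∑' j, (g j : ℝ≥0∞)) :
    (∑' i, f i) = ∑' j, g j := by
  by_cases hs : Summable f
  · have hg : Summable g := by
      apply ENNReal.tsum_coe_ne_top_iff_summable.mp
      rw [← h]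
      exact ENNReal.tsum_coe_ne_top_iff_summable.mpr hs
    rw [← ENNReal.coe_tsum hs, ← ENNReal.coe_tsum hg] at h
    exact_mod_cast h
  · have hg : ¬ Summable g := by
      intro hg
      apply hs
      apply ENNReal.tsum_coe_ne_top_iff_summable.mp
      rw [h]
      exact ENNReal.tsum_coe_ne_top_iff_summable.mpr hg
    rw [tsum_eq_zero_of_not_summable hs, tsum_eq_zero_of_not_summable hg]

lemma tsum_complex_of_nnreal {ι : Type} (f : ι → ℝ≥0) :
    ∑' i, ((f i : ℝ) : ℂ) = (((∑' i, f i : ℝ≥0) : ℝ) : ℂ) := by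
  rw [NNReal.coe_tsum, Complex.ofReal_tsum]

/-- the `ℝ≥0`-valued chain weight of a list -/
def nnw (K : List ℕ) (m : {m : Fin K.length → ℕ // StrictMono m ∧ ∀ i, 0 < m i}) : ℝ≥0 :=
  ∏ i, ((m.1 i ^ K.get i : ℕ) : ℝ≥0)⁻¹

lemma mzl_eq (K : List ℕ) :
    mzl K = ∑' m : {m : Fin K.length → ℕ // StrictMono m ∧ ∀ i, 0 < m i},
      ((nnw K m : ℝ) : ℂ) := by
  unfold mzl mz
  refine tsum_congr fun m => ?_
  unfold nnw
  push_cast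
  refine Finset.prod_congr rfl fun i _ => ?_
  rw [Complex.cpow_neg, Complex.cpow_natCast]
  try push_cast
  try ring

lemma nnw_coe (K : List ℕ) (m : {m : Fin K.length → ℕ // StrictMono m ∧ ∀ i, 0 < m i}) :
    ((nnw K m : ℝ≥0∞)) = ∏ i, pw (m.1 i) (K.get i) := by
  unfold nnw
  push_cast
  refine Finset.prod_congr rfl fun i _ => ?_
  rw [ENNReal.coe_inv (by
    have := m.2.2 i
    positivity)]
  unfold pw
  push_cast
  ring_nf

lemma mzl_eq_of_zet (K L : List ℕ) (h : zet K.reverse = zet L.reverse) :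
    mzl K = mzl L := by
  rw [mzl_eq K, mzl_eq L, tsum_complex_of_nnreal, tsum_complex_of_nnreal]
  congr 1
  apply congrArg
  apply tsum_nnreal_bridge
  calc ∑' m, ((nnw K m : ℝ≥0∞)) = ∑' m : {m : Fin K.length → ℕ // StrictMono m ∧ ∀ i, 0 < m i},
        ∏ i, pw (m.1 i) (K.get i) := tsum_congr (nnw_coe K)
    _ = zet K.reverse := mzE_eq K
    _ = zet L.reverse := h
    _ = ∑' m : {m : Fin L.length → ℕ // StrictMono m ∧ ∀ i, 0 < m i},
        ∏ i, pw (m.1 i) (L.get i) := (mzE_eq L).symm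
    _ = ∑' m, ((nnw L m : ℝ≥0∞)) := tsum_congr (fun m => (nnw_coe L m).symm)


/-- Duality formula for multiple zeta values. For any admissible
index `k` (written as `(1^{a_1−1}, b_1+1, …, 1^{a_m−1}, b_m+1)` with all `a_i, b_i ≥ 1`)
and its dual index `k†`, one has `ζ(k) = ζ(k†)`. -/
theorem mzv_duality (m : ℕ) (hm : 0 < m) (a b : ℕ → ℕ)
    (ha : ∀ i < m, 1 ≤ a i) (hb : ∀ i < m, 1 ≤ b i) :
    mzl (idxOf m a b) = mzl (dualIdxOf m a b) := by
  exact mzl_eq_of_zet _ _ (zet_duality m a b ha hb)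
end
end

section
/- Let λ = (2,2). Then ζ_λ([[3,3],[4,2]]) + ζ_λ([[2,4],[4,2]]) + ζ_λ([[2,3],[5,2]]) + ζ_λ([[2,3],[4,3]]) = ζ(3,4)ζ(3,2) + ζ(2,4)ζ(4,2) + ζ(2,5)ζ(3,2) + ζ(2,4)ζ(3,3) − ζ(3)ζ(3,2,4) − ζ(2)ζ(4,2,4) − ζ(2)ζ(3,2,5) − ζ(2)ζ(3,3,4), where [[a,b],[c,d]] denotes the tableau of shape (2,2) with first row (a,b) and second row (c,d). -/
noncomputable section

/-- The partition `λ = (2,2)` (0-indexed). -/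
def lam22 : ℕ → ℕ := fun i => if i < 2 then 2 else 0

/-- The tableau of shape `(2,2)` with first row `(a,b)` and second row `(c,d)`. -/
def tab22 (a b c d : ℂ) : ℕ × ℕ → ℂ := fun p =>
  if p = (0, 0) then a else if p = (0, 1) then b else
  if p = (1, 0) then c else if p = (1, 1) then d else 0

def zk (k n : ℕ) : ℂ := ((n : ℂ) ^ k)⁻¹

lemma cpow_nat_neg (n k : ℕ) : (n : ℂ) ^ (-(k : ℂ)) = zk k n := by
  rw [Complex.cpow_neg, Complex.cpow_natCast, zk]

lemma zk_norm_summable {k : ℕ} (hk : 2 ≤ k) : Summable fun n : ℕ => ‖zk k n‖ := by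
  have : (fun n : ℕ => ‖zk k n‖) = fun n : ℕ => ((n : ℝ) ^ k)⁻¹ := by
    funext n
    simp [zk, Complex.norm_natCast]
  rw [this]
  exact Real.summable_nat_pow_inv.mpr (by omega)

def mzP1 : Set ℕ := {n | 0 < n}
def mzP2 : Set (ℕ × ℕ) := {x | 0 < x.1 ∧ x.1 < x.2}
def mzP3 : Set (ℕ × ℕ × ℕ) := {x | 0 < x.1 ∧ x.1 < x.2.1 ∧ x.2.1 < x.2.2}

def e1 : {n : ℕ // n ∈ mzP1} ≃ {m : Fin 1 → ℕ // StrictMono m ∧ ∀ i, 0 < m i} where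
  toFun n := ⟨![n.1], ⟨by
      intro i j hij
      fin_cases i <;> fin_cases j <;> simp_all, by
      intro i; fin_cases i; exact n.2⟩⟩
  invFun m := ⟨m.1 0, m.2.2 0⟩
  left_inv n := by ext; simp
  right_inv m := by
    ext i
    fin_cases i <;> simp

def e2 (u v : ℕ) (h1 : 0 < u) (h2 : u < v) : {m : Fin 2 → ℕ // StrictMono m ∧ ∀ i, 0 < m i} :=
  ⟨![u, v], ⟨by
    intro i j hij
    fin_cases i <;> fin_cases j <;> simp_all <;> omega, by
    intro i; fin_cases i <;> simp <;> omega⟩⟩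

def E2 : {x : ℕ × ℕ // x ∈ mzP2} ≃ {m : Fin 2 → ℕ // StrictMono m ∧ ∀ i, 0 < m i} where
  toFun x := e2 x.1.1 x.1.2 x.2.1 x.2.2
  invFun m := ⟨(m.1 0, m.1 1), ⟨m.2.2 0, m.2.1 (by decide : (0 : Fin 2) < 1)⟩⟩
  left_inv x := by ext <;> simp [e2]
  right_inv m := by
    ext i
    fin_cases i <;> simp [e2]

def e3 (u v w : ℕ) (h1 : 0 < u) (h2 : u < v) (h3 : v < w) :
    {m : Fin 3 → ℕ // StrictMono m ∧ ∀ i, 0 < m i} :=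
  ⟨![u, v, w], ⟨by
    intro i j hij
    fin_cases i <;> fin_cases j <;> simp_all <;> omega, by
    intro i; fin_cases i <;> simp <;> omega⟩⟩

def E3 : {x : ℕ × ℕ × ℕ // x ∈ mzP3} ≃ {m : Fin 3 → ℕ // StrictMono m ∧ ∀ i, 0 < m i} where
  toFun x := e3 x.1.1 x.1.2.1 x.1.2.2 x.2.1 x.2.2.1 x.2.2.2
  invFun m := ⟨(m.1 0, m.1 1, m.1 2),
    ⟨m.2.2 0, m.2.1 (by decide : (0 : Fin 3) < 1), m.2.1 (by decide : (1 : Fin 3) < 2)⟩⟩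
  left_inv x := by ext <;> simp [e3]
  right_inv m := by
    ext i
    fin_cases i <;> simp [e3]

lemma mzl1 (p : ℕ) : mzl [p] = ∑' n : ℕ, mzP1.indicator (zk p) n := by
  rw [← tsum_subtype]
  unfold mzl mz
  simp only [List.length_cons, List.length_nil, Nat.zero_add, Nat.reduceAdd]
  rw [← Equiv.tsum_eq e1]
  refine tsum_congr fun n => ?_
  simp [e1, cpow_nat_neg]

lemma mzl2 (p q : ℕ) :
    mzl [p, q] = ∑' x : ℕ × ℕ, mzP2.indicator (fun x => zk p x.1 * zk q x.2) x := by
  rw [← tsum_subtype]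
  unfold mzl mz
  simp only [List.length_cons, List.length_nil, Nat.zero_add, Nat.reduceAdd]
  rw [← Equiv.tsum_eq E2]
  refine tsum_congr fun x => ?_
  simp [E2, e2, Fin.prod_univ_two, cpow_nat_neg]

lemma mzl3 (p q r : ℕ) :
    mzl [p, q, r] = ∑' x : ℕ × ℕ × ℕ,
      mzP3.indicator (fun x => zk p x.1 * zk q x.2.1 * zk r x.2.2) x := by
  rw [← tsum_subtype]
  unfold mzl mz
  simp only [List.length_cons, List.length_nil, Nat.zero_add, Nat.reduceAdd]
  rw [← Equiv.tsum_eq E3]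
  refine tsum_congr fun x => ?_
  simp [E3, e3, Fin.prod_univ_three, cpow_nat_neg]

abbrev XX : Type := (ℕ × ℕ) × (ℕ × ℕ)

def wgt (p q r t : ℕ) : XX → ℂ := fun x =>
  (zk p x.1.1 * zk q x.1.2) * (zk r x.2.1 * zk t x.2.2)

/-- SSYT condition for shape (2,2): x = ((a,b),(c,d)). -/
def Scond : Set XX := {x | 0 < x.1.1 ∧ x.1.1 ≤ x.1.2 ∧ x.1.1 < x.2.1 ∧ x.1.2 < x.2.2 ∧ x.2.1 ≤ x.2.2}
def Tcond : Set XX := {x | 0 < x.1.1 ∧ 0 < x.1.2 ∧ x.1.1 < x.2.1 ∧ x.1.2 < x.2.2}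
def Ucond : Set XX := {x | 0 < x.1.1 ∧ 0 < x.1.2 ∧ x.1.2 < x.2.2 ∧ x.2.2 < x.2.1}
def Acond : Set XX := {x | 0 < x.1.2 ∧ x.1.2 < x.1.1 ∧ x.1.1 < x.2.1 ∧ x.1.2 < x.2.2}
def Bcond : Set XX := {x | 0 < x.1.1 ∧ x.1.1 ≤ x.1.2 ∧ x.1.2 < x.2.2 ∧ x.2.2 < x.2.1}
def Vcond : Set XX := {x | 0 < x.1.2 ∧ x.1.2 < x.1.1 ∧ x.1.2 < x.2.2 ∧ x.2.2 < x.2.1}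

lemma skewCell_iff (p : ℕ × ℕ) :
    SkewCell lam22 (fun _ => 0) p ↔ p.1 < 2 ∧ p.2 < 2 := by
  unfold SkewCell lam22
  by_cases h : p.1 < 2 <;> simp [h]

def toM (x : XX) : ℕ × ℕ → ℕ := fun p =>
  if p = (0, 0) then x.1.1 else if p = (0, 1) then x.1.2 else
  if p = (1, 0) then x.2.1 else if p = (1, 1) then x.2.2 else 0

lemma toM00 (x : XX) : toM x (0, 0) = x.1.1 := rfl
lemma toM01 (x : XX) : toM x (0, 1) = x.1.2 := rfl
lemma toM10 (x : XX) : toM x (1, 0) = x.2.1 := rfl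
lemma toM11 (x : XX) : toM x (1, 1) = x.2.2 := rfl

def ES : {x : XX // x ∈ Scond} ≃ {M : ℕ × ℕ → ℕ // IsSSYT lam22 (fun _ => 0) M} where
  toFun x := ⟨toM x.1, by
    obtain ⟨⟨⟨a, b⟩, ⟨c, d⟩⟩, hx⟩ := x
    simp only [Scond, Set.mem_setOf_eq] at hx
    obtain ⟨h1, h2, h3, h4, h5⟩ := hx
    refine ⟨?_, ?_, ?_, ?_⟩
    · rintro ⟨i, j⟩ hp
      rw [skewCell_iff] at hp
      obtain ⟨hi, hj⟩ := hp
      interval_cases i <;> interval_cases j <;> simp only [Nat.reduceAdd, toM00, toM01, toM10, toM11] <;> omega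
    · rintro ⟨i, j⟩ hp
      rw [skewCell_iff] at hp
      simp only [not_and, not_lt] at hp
      simp only [toM, Prod.mk.injEq]
      split_ifs with g1 g2 g3 g4 <;> try rfl
      all_goals omega
    · intro i j hp hq
      rw [skewCell_iff] at hp hq
      obtain ⟨hi, hj⟩ := hp
      have hj2 := hq.2
      interval_cases i <;> interval_cases j <;> simp only [Nat.reduceAdd, toM00, toM01, toM10, toM11] <;> omega
    · intro i j hp hq
      rw [skewCell_iff] at hp hq
      obtain ⟨hi, hj⟩ := hp
      have hi2 := hq.1
      interval_cases i <;> interval_cases j <;> simp only [Nat.reduceAdd, toM00, toM01, toM10, toM11] <;> omega⟩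
  invFun M := ⟨((M.1 (0, 0), M.1 (0, 1)), (M.1 (1, 0), M.1 (1, 1))), by
    obtain ⟨M, h0, hz, hrow, hcol⟩ := M
    have c00 : SkewCell lam22 (fun _ => 0) (0, 0) := by rw [skewCell_iff]; omega
    have c01 : SkewCell lam22 (fun _ => 0) (0, 1) := by rw [skewCell_iff]; omega
    have c10 : SkewCell lam22 (fun _ => 0) (1, 0) := by rw [skewCell_iff]; omega
    have c11 : SkewCell lam22 (fun _ => 0) (1, 1) := by rw [skewCell_iff]; omega
    exact ⟨h0 _ c00, hrow 0 0 c00 c01, hcol 0 0 c00 c10, hcol 0 1 c01 c11,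
      hrow 1 0 c10 c11⟩⟩
  left_inv x := by
    apply Subtype.ext
    simp only [toM00, toM01, toM10, toM11]
  right_inv M := by
    obtain ⟨M, hM⟩ := M
    simp only [Subtype.mk.injEq]
    funext p
    obtain ⟨i, j⟩ := p
    by_cases hc : SkewCell lam22 (fun _ => 0) (i, j)
    · rw [skewCell_iff] at hc
      obtain ⟨hi, hj⟩ := hc
      interval_cases i <;> interval_cases j <;> rfl
    · rw [hM.2.1 _ hc]
      rw [skewCell_iff] at hc
      simp only [not_and, not_lt] at hc
      simp only [toM, Prod.mk.injEq]
      split_ifs with g1 g2 g3 g4 <;> try rfl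
      all_goals omega



lemma indicator_summable {ι : Type*} {f : ι → ℂ} (hf : Summable fun x => ‖f x‖) (s : Set ι) :
    Summable (s.indicator f) :=
  Summable.of_norm (hf.of_nonneg_of_le (fun _ => norm_nonneg _)
    (fun x => norm_indicator_le_norm_self f x))

lemma indicator_norm_summable {ι : Type*} {f : ι → ℂ} (hf : Summable fun x => ‖f x‖)
    (s : Set ι) : Summable fun x => ‖s.indicator f x‖ :=
  hf.of_nonneg_of_le (fun _ => norm_nonneg _) (fun x => norm_indicator_le_norm_self f x)

lemma wgt_norm_summable {p q r t : ℕ} (hp : 2 ≤ p) (hq : 2 ≤ q) (hr : 2 ≤ r) (ht : 2 ≤ t) :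
    Summable fun x : XX => ‖wgt p q r t x‖ :=
by
  have h1 : Summable fun y : ℕ × ℕ => ‖zk p y.1 * zk q y.2‖ :=
    Summable.mul_norm (f := zk p) (g := zk q) (zk_norm_summable hp) (zk_norm_summable hq)
  have h2 : Summable fun y : ℕ × ℕ => ‖zk r y.1 * zk t y.2‖ :=
    Summable.mul_norm (f := zk r) (g := zk t) (zk_norm_summable hr) (zk_norm_summable ht)
  exact Summable.mul_norm (f := fun y : ℕ × ℕ => zk p y.1 * zk q y.2)
    (g := fun y : ℕ × ℕ => zk r y.1 * zk t y.2) h1 h2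

lemma tab_00 (a b c d : ℂ) : tab22 a b c d (0, 0) = a := rfl
lemma tab_01 (a b c d : ℂ) : tab22 a b c d (0, 1) = b := rfl
lemma tab_10 (a b c d : ℂ) : tab22 a b c d (1, 0) = c := rfl
lemma tab_11 (a b c d : ℂ) : tab22 a b c d (1, 1) = d := rfl

lemma cells_eq : skewCells lam22 (fun _ => 0) 2 = {(0, 0), (0, 1), (1, 0), (1, 1)} := by decide

lemma prod_cells (f : ℕ × ℕ → ℂ) :
    ∏ p ∈ skewCells lam22 (fun _ => 0) 2, f p = f (0, 0) * f (0, 1) * f (1, 0) * f (1, 1) := by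
  rw [cells_eq, Finset.prod_insert (by decide), Finset.prod_insert (by decide),
    Finset.prod_insert (by decide), Finset.prod_singleton]
  ring

lemma ES_val (x : {x : XX // x ∈ Scond}) : ((ES x).1 : ℕ × ℕ → ℕ) = toM x.1 := rfl

lemma schur_eval (p q r t : ℕ) :
    schurZeta lam22 (fun _ => 0) 2 (tab22 p q r t)
      = ∑' x : XX, Scond.indicator (wgt p q r t) x := by
  rw [← tsum_subtype]
  unfold schurZeta
  rw [← Equiv.tsum_eq ES]
  refine tsum_congr fun x => ?_
  rw [prod_cells, ES_val, toM00, toM01, toM10, toM11, tab_00, tab_01, tab_10, tab_11,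
    cpow_nat_neg, cpow_nat_neg, cpow_nat_neg, cpow_nat_neg]
  unfold wgt
  ring

/-- Pairing equiv for products of double zetas: x = ((a,b),(c,d)) ↦ ((a,c),(b,d)). -/
def tauT : XX ≃ XX where
  toFun x := ((x.1.1, x.2.1), (x.1.2, x.2.2))
  invFun x := ((x.1.1, x.2.1), (x.1.2, x.2.2))
  left_inv x := rfl
  right_inv x := rfl

/-- Pairing equiv for single times triple: ((a,b),(c,d)) ↦ (a,(b,d,c)). -/
def rhoU : XX ≃ ℕ × ℕ × ℕ × ℕ where
  toFun x := (x.1.1, (x.1.2, x.2.2, x.2.1))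
  invFun u := ((u.1, u.2.1), (u.2.2.2, u.2.2.1))
  left_inv x := rfl
  right_inv u := rfl

/-- The swap a ↔ d. -/
def sigmaE : XX ≃ XX where
  toFun x := ((x.2.2, x.1.2), (x.2.1, x.1.1))
  invFun x := ((x.2.2, x.1.2), (x.2.1, x.1.1))
  left_inv x := rfl
  right_inv x := rfl

lemma pair_prod {p q r t : ℕ} (hp : 2 ≤ p) (hq : 2 ≤ q) (hr : 2 ≤ r) (ht : 2 ≤ t) :
    mzl [p, r] * mzl [q, t] = ∑' x : XX, Tcond.indicator (wgt p q r t) x := by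
  have h1 : Summable fun y : ℕ × ℕ => ‖zk p y.1 * zk r y.2‖ :=
    Summable.mul_norm (f := zk p) (g := zk r) (zk_norm_summable hp) (zk_norm_summable hr)
  have h2 : Summable fun y : ℕ × ℕ => ‖zk q y.1 * zk t y.2‖ :=
    Summable.mul_norm (f := zk q) (g := zk t) (zk_norm_summable hq) (zk_norm_summable ht)
  rw [mzl2, mzl2,
    tsum_mul_tsum_of_summable_norm (indicator_norm_summable h1 mzP2)
      (indicator_norm_summable h2 mzP2)]
  rw [← Equiv.tsum_eq tauT]
  refine tsum_congr fun x => ?_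
  obtain ⟨⟨a, b⟩, c, d⟩ := x
  simp only [tauT, Equiv.coe_fn_mk, Set.indicator_apply, Set.mem_setOf_eq, mzP2, Tcond, wgt]
  split_ifs <;> first | ring1 | (exfalso; omega)

lemma corr_prod {p q r t : ℕ} (hp : 2 ≤ p) (hq : 2 ≤ q) (hr : 2 ≤ r) (ht : 2 ≤ t) :
    mzl [p] * mzl [q, t, r] = ∑' x : XX, Ucond.indicator (wgt p q r t) x := by
  have h1 := zk_norm_summable hp
  have h3 : Summable fun y : ℕ × ℕ × ℕ => ‖zk q y.1 * zk t y.2.1 * zk r y.2.2‖ := by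
    have h := Summable.mul_norm (f := zk q) (g := fun z : ℕ × ℕ => zk t z.1 * zk r z.2)
      (zk_norm_summable hq)
      (Summable.mul_norm (f := zk t) (g := zk r) (zk_norm_summable ht) (zk_norm_summable hr))
    exact h.congr fun y => by rw [mul_assoc]
  rw [mzl1, mzl3,
    tsum_mul_tsum_of_summable_norm (indicator_norm_summable h1 mzP1)
      (indicator_norm_summable h3 mzP3)]
  rw [← Equiv.tsum_eq rhoU]
  refine tsum_congr fun x => ?_
  obtain ⟨⟨a, b⟩, c, d⟩ := x
  simp only [rhoU, Equiv.coe_fn_mk, Set.indicator_apply, Set.mem_setOf_eq, mzP1, mzP3,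
    Ucond, wgt]
  split_ifs <;> first | ring1 | (exfalso; omega)

lemma split_T (w : XX → ℂ) (x : XX) :
    Tcond.indicator w x
      = Scond.indicator w x + Acond.indicator w x + Bcond.indicator w x := by
  obtain ⟨⟨a, b⟩, c, d⟩ := x
  simp only [Set.indicator_apply, Set.mem_setOf_eq, Tcond, Scond, Acond, Bcond]
  split_ifs <;> first | ring1 | (exfalso; omega)

lemma split_U (w : XX → ℂ) (x : XX) :
    Ucond.indicator w x = Bcond.indicator w x + Vcond.indicator w x := by
  obtain ⟨⟨a, b⟩, c, d⟩ := x
  simp only [Set.indicator_apply, Set.mem_setOf_eq, Ucond, Bcond, Vcond]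
  split_ifs <;> first | ring1 | (exfalso; omega)

def Wtot : XX → ℂ := fun x =>
  wgt 3 3 4 2 x + wgt 2 4 4 2 x + wgt 2 3 5 2 x + wgt 2 3 4 3 x

lemma Wtot_swap (x : XX) : Wtot (sigmaE x) = Wtot x := by
  obtain ⟨⟨a, b⟩, c, d⟩ := x
  simp only [Wtot, wgt, sigmaE, Equiv.coe_fn_mk]
  ring

lemma AV_eq : ∑' x : XX, Acond.indicator Wtot x = ∑' x : XX, Vcond.indicator Wtot x := by
  rw [← Equiv.tsum_eq sigmaE (Vcond.indicator Wtot)]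
  refine tsum_congr fun x => ?_
  have hmem : sigmaE x ∈ Vcond ↔ x ∈ Acond := by
    obtain ⟨⟨a, b⟩, c, d⟩ := x
    simp only [sigmaE, Equiv.coe_fn_mk, Set.mem_setOf_eq, Vcond, Acond]
    omega
  by_cases h : x ∈ Acond
  · rw [Set.indicator_of_mem h, Set.indicator_of_mem (hmem.mpr h), Wtot_swap]
  · rw [Set.indicator_of_notMem h, Set.indicator_of_notMem (fun hc => h (hmem.mp hc))]

/-- For `λ = (2,2)`,
`ζ_λ([[3,3],[4,2]]) + ζ_λ([[2,4],[4,2]]) + ζ_λ([[2,3],[5,2]]) + ζ_λ([[2,3],[4,3]])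
 = ζ(3,4)ζ(3,2) + ζ(2,4)ζ(4,2) + ζ(2,5)ζ(3,2) + ζ(2,4)ζ(3,3)
   − ζ(3)ζ(3,2,4) − ζ(2)ζ(4,2,4) − ζ(2)ζ(3,2,5) − ζ(2)ζ(3,3,4)`. -/
theorem schur_zeta_22_example :
    schurZeta lam22 (fun _ => 0) 2 (tab22 3 3 4 2)
      + schurZeta lam22 (fun _ => 0) 2 (tab22 2 4 4 2)
      + schurZeta lam22 (fun _ => 0) 2 (tab22 2 3 5 2)
      + schurZeta lam22 (fun _ => 0) 2 (tab22 2 3 4 3)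
    = mzl [3, 4] * mzl [3, 2] + mzl [2, 4] * mzl [4, 2]
      + mzl [2, 5] * mzl [3, 2] + mzl [2, 4] * mzl [3, 3]
      - mzl [3] * mzl [3, 2, 4] - mzl [2] * mzl [4, 2, 4]
      - mzl [2] * mzl [3, 2, 5] - mzl [2] * mzl [3, 3, 4] := by
  have w1s := wgt_norm_summable (p := 3) (q := 3) (r := 4) (t := 2)
    (by norm_num) (by norm_num) (by norm_num) (by norm_num)
  have w2s := wgt_norm_summable (p := 2) (q := 4) (r := 4) (t := 2)
    (by norm_num) (by norm_num) (by norm_num) (by norm_num)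
  have w3s := wgt_norm_summable (p := 2) (q := 3) (r := 5) (t := 2)
    (by norm_num) (by norm_num) (by norm_num) (by norm_num)
  have w4s := wgt_norm_summable (p := 2) (q := 3) (r := 4) (t := 3)
    (by norm_num) (by norm_num) (by norm_num) (by norm_num)
  have key : ∀ p q r t : ℕ, 2 ≤ p → 2 ≤ q → 2 ≤ r → 2 ≤ t →
      mzl [p, r] * mzl [q, t]
        = (∑' x : XX, Scond.indicator (wgt p q r t) x)
          + (∑' x : XX, Acond.indicator (wgt p q r t) x)
          + (∑' x : XX, Bcond.indicator (wgt p q r t) x) := by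
    intro p q r t hp hq hr ht
    have hw := wgt_norm_summable hp hq hr ht
    rw [pair_prod hp hq hr ht,
      ← Summable.tsum_add (indicator_summable hw Scond) (indicator_summable hw Acond),
      ← Summable.tsum_add ((indicator_summable hw Scond).add (indicator_summable hw Acond))
        (indicator_summable hw Bcond)]
    exact tsum_congr fun x => split_T _ x
  have keyU : ∀ p q r t : ℕ, 2 ≤ p → 2 ≤ q → 2 ≤ r → 2 ≤ t →
      mzl [p] * mzl [q, t, r]
        = (∑' x : XX, Bcond.indicator (wgt p q r t) x)
          + (∑' x : XX, Vcond.indicator (wgt p q r t) x) := by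
    intro p q r t hp hq hr ht
    have hw := wgt_norm_summable hp hq hr ht
    rw [corr_prod hp hq hr ht,
      ← Summable.tsum_add (indicator_summable hw Bcond) (indicator_summable hw Vcond)]
    exact tsum_congr fun x => split_U _ x
  have hind : ∀ (s : Set XX) (x : XX), s.indicator Wtot x
      = s.indicator (wgt 3 3 4 2) x + s.indicator (wgt 2 4 4 2) x
        + s.indicator (wgt 2 3 5 2) x + s.indicator (wgt 2 3 4 3) x := by
    intro s x
    by_cases h : x ∈ s
    · simp only [Set.indicator_of_mem h]; rfl
    · simp only [Set.indicator_of_notMem h]; ring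
  have sumsplit : ∀ s : Set XX, ∑' x : XX, s.indicator Wtot x
      = (∑' x : XX, s.indicator (wgt 3 3 4 2) x) + (∑' x : XX, s.indicator (wgt 2 4 4 2) x)
        + (∑' x : XX, s.indicator (wgt 2 3 5 2) x)
        + (∑' x : XX, s.indicator (wgt 2 3 4 3) x) := by
    intro s
    rw [← Summable.tsum_add (indicator_summable w1s s) (indicator_summable w2s s),
      ← Summable.tsum_add ((indicator_summable w1s s).add (indicator_summable w2s s))
        (indicator_summable w3s s),
      ← Summable.tsum_add (((indicator_summable w1s s).add (indicator_summable w2s s)).add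
        (indicator_summable w3s s)) (indicator_summable w4s s)]
    exact tsum_congr fun x => hind s x
  have hA4 : (∑' x : XX, Acond.indicator (wgt 3 3 4 2) x)
        + (∑' x : XX, Acond.indicator (wgt 2 4 4 2) x)
        + (∑' x : XX, Acond.indicator (wgt 2 3 5 2) x)
        + (∑' x : XX, Acond.indicator (wgt 2 3 4 3) x)
      = (∑' x : XX, Vcond.indicator (wgt 3 3 4 2) x)
        + (∑' x : XX, Vcond.indicator (wgt 2 4 4 2) x)
        + (∑' x : XX, Vcond.indicator (wgt 2 3 5 2) x)
        + (∑' x : XX, Vcond.indicator (wgt 2 3 4 3) x) := by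
    rw [← sumsplit Acond, ← sumsplit Vcond]
    exact AV_eq
  have es1 : schurZeta lam22 (fun _ => 0) 2 (tab22 3 3 4 2)
      = ∑' x : XX, Scond.indicator (wgt 3 3 4 2) x := by
    have h := schur_eval 3 3 4 2; norm_num at h; exact h
  have es2 : schurZeta lam22 (fun _ => 0) 2 (tab22 2 4 4 2)
      = ∑' x : XX, Scond.indicator (wgt 2 4 4 2) x := by
    have h := schur_eval 2 4 4 2; norm_num at h; exact h
  have es3 : schurZeta lam22 (fun _ => 0) 2 (tab22 2 3 5 2)
      = ∑' x : XX, Scond.indicator (wgt 2 3 5 2) x := by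
    have h := schur_eval 2 3 5 2; norm_num at h; exact h
  have es4 : schurZeta lam22 (fun _ => 0) 2 (tab22 2 3 4 3)
      = ∑' x : XX, Scond.indicator (wgt 2 3 4 3) x := by
    have h := schur_eval 2 3 4 3; norm_num at h; exact h
  rw [es1, es2, es3, es4,
    key 3 3 4 2 (by norm_num) (by norm_num) (by norm_num) (by norm_num),
    key 2 4 4 2 (by norm_num) (by norm_num) (by norm_num) (by norm_num),
    key 2 3 5 2 (by norm_num) (by norm_num) (by norm_num) (by norm_num),
    key 2 3 4 3 (by norm_num) (by norm_num) (by norm_num) (by norm_num),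
    keyU 3 3 4 2 (by norm_num) (by norm_num) (by norm_num) (by norm_num),
    keyU 2 4 4 2 (by norm_num) (by norm_num) (by norm_num) (by norm_num),
    keyU 2 3 5 2 (by norm_num) (by norm_num) (by norm_num) (by norm_num),
    keyU 2 3 4 3 (by norm_num) (by norm_num) (by norm_num) (by norm_num)]
  linear_combination -hA4
end
end
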